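/- arXiv:1210.1164 — 6 statements merged into one kernel-verified Lean document; each statement's English description precedes it below -/
import Mathlib

section
/- Let q ≥ 1 and n ≥ 1. The maximum of F(x) = Σ_{i=1}^n x_i^q over all x = (x_1,...,x_n) satisfying x_1 ≥ x_2 ≥ ... ≥ x_n ≥ 0 and Σ_{i=1}^n x_i/λ_i ≤ 1 is attained at a point of the form x_1 = x_2 = ... = x_k = 1/(Σ_{j=1}^k 1/λ_j) and x_{k+1} = ... = x_n = 0, for some k with 1 ≤ k ≤ n. -/
/-!
Writing `S k = ∑_{j<k} 1/λ_j` and `e_k` for the step point with `k` entries `1/S k`, every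
feasible `y` (extended by `y_n = 0`) decomposes as `y = ∑_{k<n} w_k e_{k+1}` with
`w_k = (y_k - y_{k+1}) S (k+1) ≥ 0`, and Abel summation gives `∑ w_k = ∑ y_i/λ_i ≤ 1`.
So `y` is a convex combination of the `e_k` and `0`; since `F` is convex with `F 0 = 0`,
`F y ≤ max_k F e_k`.
-/

open Finset

section Jensen

variable {𝕜 E β ι : Type*} [Field 𝕜] [LinearOrder 𝕜] [IsStrictOrderedRing 𝕜] [AddCommGroup E]
  [AddCommGroup β] [PartialOrder β] [IsOrderedAddMonoid β] [Module 𝕜 E] [Module 𝕜 β]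
  [IsStrictOrderedModule 𝕜 β] {s : Set E} {f : E → β} {t : Finset ι} {w : ι → 𝕜} {p : ι → E}

theorem ConvexOn.map_sum_le_of_sum_le_one (hf : ConvexOn 𝕜 s f) (h₀ : ∀ i ∈ t, 0 ≤ w i)
    (h₁ : ∑ i ∈ t, w i ≤ 1) (hmem : ∀ i ∈ t, p i ∈ s) (hs : 0 ∈ s) (hf₀ : f 0 ≤ 0) :
    f (∑ i ∈ t, w i • p i) ≤ ∑ i ∈ t, w i • f (p i) := by
  have hv : 0 ≤ 1 - ∑ i ∈ t, w i := sub_nonneg.2 h₁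
  have h := hf.map_add_sum_le h₀ (sub_add_cancel _ _) hmem hv hs
  rw [smul_zero, zero_add] at h
  exact h.trans (add_le_of_nonpos_left (smul_nonpos_of_nonneg_of_nonpos hv hf₀))

end Jensen

theorem ConvexOn.sum_comp_apply {α : Type*} {s : Set ℝ} {g : ℝ → ℝ} (hg : ConvexOn ℝ s g)
    (t : Finset α) : ConvexOn ℝ (Set.univ.pi fun _ : α => s) (fun y => ∑ i ∈ t, g (y i)) := by
  refine ⟨convex_pi fun _ _ => hg.1, fun y hy z hz a b ha hb hab => ?_⟩
  simp only [Pi.add_apply, Pi.smul_apply, smul_eq_mul, mul_sum, ← sum_add_distrib]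
  exact sum_le_sum fun i _ => hg.2 (hy i trivial) (hz i trivial) ha hb hab

theorem sum_range_sub_mul_sum_range_succ {R : Type*} [CommRing R] (g a : ℕ → R) (m : ℕ) :
    ∑ k ∈ range m, (g k - g (k + 1)) * ∑ j ∈ range (k + 1), a j
      = ∑ k ∈ range m, g k * a k - g m * ∑ j ∈ range m, a j := by
  induction m with
  | zero => simp
  | succ m ih =>
    rw [sum_range_succ, ih, sum_range_succ (fun k => g k * a k), sum_range_succ a]
    ring

/-- Telescoping, written through `y (max i k)` so that the terms with `k < i` cancel. -/
theorem sum_range_ite_le_sub_succ {y : ℕ → ℝ} {n : ℕ} (hy : ∀ i, n ≤ i → y i = 0) (i : ℕ) :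
    ∑ k ∈ range n, (if i ≤ k then y k - y (k + 1) else 0) = y i := by
  have hterm : ∀ k, (if i ≤ k then y k - y (k + 1) else 0)
      = y (max i k) - y (max i (k + 1)) := by
    intro k
    split_ifs with h
    · rw [max_eq_right h, max_eq_right (by omega)]
    · rw [max_eq_left (by omega), max_eq_left (by omega), sub_self]
  simp only [hterm]
  rw [sum_range_sub' (fun k => y (max i k)), max_eq_left (Nat.zero_le i),
    hy _ (le_max_right i n), sub_zero]

section StepPoint

variable (Λ : ℕ → ℝ)

noncomputable def stepPoint (k : ℕ) : ℕ → ℝ :=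
  fun i => if i < k then 1 / ∑ j ∈ range k, 1 / Λ j else 0

noncomputable def stepWeight (y : ℕ → ℝ) (k : ℕ) : ℝ :=
  (y k - y (k + 1)) * ∑ j ∈ range (k + 1), 1 / Λ j

variable {Λ}

theorem stepPoint_nonneg (hΛ : ∀ i, 0 ≤ Λ i) (k i : ℕ) : 0 ≤ stepPoint Λ k i := by
  unfold stepPoint
  split_ifs
  · exact one_div_nonneg.2 (sum_nonneg fun j _ => one_div_nonneg.2 (hΛ j))
  · exact le_rfl

theorem stepPoint_antitone (hΛ : ∀ i, 0 ≤ Λ i) (k : ℕ) : Antitone (stepPoint Λ k) := by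
  intro i j hij
  by_cases hj : j < k
  · simp [stepPoint, hj, hij.trans_lt hj]
  · simpa [stepPoint, hj] using stepPoint_nonneg hΛ k i

theorem sum_stepPoint_div (hΛ : ∀ i, 0 < Λ i) {k n : ℕ} (hk : 1 ≤ k) (hkn : k ≤ n) :
    ∑ i ∈ range n, stepPoint Λ k i / Λ i = 1 := by
  have hS : 0 < ∑ j ∈ range k, 1 / Λ j :=
    sum_pos (fun j _ => one_div_pos.2 (hΛ j)) (nonempty_range_iff.2 (by omega))
  rw [← sum_range_add_sum_Ico _ hkn]
  have hzero : ∑ i ∈ Ico k n, stepPoint Λ k i / Λ i = 0 :=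
    sum_eq_zero fun i hi => by simp [stepPoint, (mem_Ico.1 hi).1]
  have hhead : ∑ i ∈ range k, stepPoint Λ k i / Λ i
      = (1 / ∑ j ∈ range k, 1 / Λ j) * ∑ j ∈ range k, 1 / Λ j := by
    rw [mul_sum]
    exact sum_congr rfl fun i hi => by rw [stepPoint, if_pos (mem_range.1 hi)]; ring
  rw [hzero, add_zero, hhead, one_div_mul_cancel hS.ne']

theorem stepWeight_nonneg (hΛ : ∀ i, 0 ≤ Λ i) {y : ℕ → ℝ} (hy : Antitone y) (k : ℕ) :
    0 ≤ stepWeight Λ y k :=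
  mul_nonneg (sub_nonneg.2 (hy k.le_succ)) (sum_nonneg fun j _ => one_div_nonneg.2 (hΛ j))

theorem sum_stepWeight {y : ℕ → ℝ} {n : ℕ} (hy : y n = 0) :
    ∑ k ∈ range n, stepWeight Λ y k = ∑ i ∈ range n, y i / Λ i := by
  simp only [stepWeight, sum_range_sub_mul_sum_range_succ, hy, zero_mul, sub_zero,
    mul_one_div]

theorem sum_stepWeight_smul_stepPoint (hΛ : ∀ i, 0 < Λ i) {y : ℕ → ℝ} {n : ℕ}
    (hy : ∀ i, n ≤ i → y i = 0) :
    ∑ k ∈ range n, stepWeight Λ y k • stepPoint Λ (k + 1) = y := by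
  funext i
  rw [Finset.sum_apply, ← sum_range_ite_le_sub_succ hy i]
  refine sum_congr rfl fun k _ => ?_
  have hS : 0 < ∑ j ∈ range (k + 1), 1 / Λ j :=
    sum_pos (fun j _ => one_div_pos.2 (hΛ j)) (nonempty_range_iff.2 k.succ_ne_zero)
  by_cases hik : i ≤ k
  · simp only [Pi.smul_apply, smul_eq_mul, stepWeight, stepPoint, if_pos (Nat.lt_succ_of_le hik),
      if_pos hik, mul_assoc, mul_one_div_cancel hS.ne', mul_one]
  · simp [stepPoint, hik, show ¬ i < k + 1 by omega]

theorem sum_rpow_le_of_forall_sum_rpow_stepPoint_le {q : ℝ} (hq : 1 ≤ q)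
    (hΛ : ∀ i, 0 < Λ i) {y : ℕ → ℝ} {n : ℕ} (hy_anti : Antitone y)
    (hy_zero : ∀ i, n ≤ i → y i = 0) (hy : ∑ i ∈ range n, y i / Λ i ≤ 1) {M : ℝ}
    (hM₀ : 0 ≤ M) (hM : ∀ k ∈ Icc 1 n, ∑ i ∈ range n, stepPoint Λ k i ^ q ≤ M) :
    ∑ i ∈ range n, y i ^ q ≤ M := by
  have hΛ₀ : ∀ i, 0 ≤ Λ i := fun i => (hΛ i).le
  have hF := (convexOn_rpow hq).sum_comp_apply (range n)
  have hF₀ : ∑ i ∈ range n, (0 : ℕ → ℝ) i ^ q ≤ 0 := by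
    simp [Real.zero_rpow (by linarith : q ≠ 0)]
  have hw : ∀ k ∈ range n, 0 ≤ stepWeight Λ y k := fun k _ => stepWeight_nonneg hΛ₀ hy_anti k
  calc ∑ i ∈ range n, y i ^ q
      = ∑ i ∈ range n, (∑ k ∈ range n, stepWeight Λ y k • stepPoint Λ (k + 1)) i ^ q := by
        rw [sum_stepWeight_smul_stepPoint hΛ hy_zero]
    _ ≤ ∑ k ∈ range n, stepWeight Λ y k • ∑ i ∈ range n, stepPoint Λ (k + 1) i ^ q :=
        hF.map_sum_le_of_sum_le_one hw ((sum_stepWeight (hy_zero n le_rfl)).trans_le hy)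
          (fun k _ i _ => stepPoint_nonneg hΛ₀ (k + 1) i) (fun _ _ => Set.self_mem_Ici) hF₀
    _ ≤ ∑ k ∈ range n, stepWeight Λ y k * M :=
        sum_le_sum fun k hk => mul_le_mul_of_nonneg_left
          (hM (k + 1) (mem_Icc.2 ⟨by omega, mem_range.1 hk⟩)) (hw k hk)
    _ = (∑ k ∈ range n, stepWeight Λ y k) * M := (sum_mul ..).symm
    _ ≤ M := mul_le_of_le_one_left hM₀ ((sum_stepWeight (hy_zero n le_rfl)).trans_le hy)

end StepPoint

section ZeroExtend

variable {α : Type*} [Zero α] {n : ℕ}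

def zeroExtend (y : Fin n → α) : ℕ → α :=
  fun i => if h : i < n then y ⟨i, h⟩ else 0

theorem zeroExtend_of_le (y : Fin n → α) {i : ℕ} (hi : n ≤ i) : zeroExtend y i = 0 := by
  simp [zeroExtend, Nat.not_lt.2 hi]

theorem sum_zeroExtend {β : Type*} [AddCommMonoid β] (g : ℕ → α → β) (y : Fin n → α) :
    ∑ i : Fin n, g i (y i) = ∑ j ∈ range n, g j (zeroExtend y j) := by
  rw [← Fin.sum_univ_eq_sum_range (fun j => g j (zeroExtend y j))]
  simp [zeroExtend]

theorem antitone_zeroExtend [Preorder α] {y : Fin n → α} (hy₀ : ∀ i, 0 ≤ y i)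
    (hy : Antitone y) : Antitone (zeroExtend y) := by
  intro i j hij
  by_cases hj : j < n
  · have hij' : (⟨i, hij.trans_lt hj⟩ : Fin n) ≤ ⟨j, hj⟩ := hij
    simpa [zeroExtend, hj, hij.trans_lt hj] using hy hij'
  · simp only [zeroExtend, hj, dite_false]
    split_ifs
    exacts [hy₀ _, le_rfl]

end ZeroExtend

theorem stmt0_general (q : ℝ) (hq : 1 ≤ q) (n : ℕ) (hn : 1 ≤ n)
    (Λ : ℕ → ℝ) (hΛpos : ∀ i, 0 < Λ i) :
    ∃ (x : Fin n → ℝ) (k : ℕ), 1 ≤ k ∧ k ≤ n ∧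
      (∀ i : Fin n, (i : ℕ) < k → x i = 1 / ∑ j ∈ Finset.range k, 1 / Λ j) ∧
      (∀ i : Fin n, k ≤ (i : ℕ) → x i = 0) ∧
      (∀ i : Fin n, 0 ≤ x i) ∧
      (∀ i j : Fin n, i ≤ j → x j ≤ x i) ∧
      (∑ i, x i / Λ (i : ℕ)) ≤ 1 ∧
      (∀ y : Fin n → ℝ,
        (∀ i, 0 ≤ y i) → (∀ i j : Fin n, i ≤ j → y j ≤ y i) →
        (∑ i, y i / Λ (i : ℕ)) ≤ 1 →
        (∑ i, (y i) ^ q) ≤ ∑ i, (x i) ^ q) := by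
  have hΛ₀ : ∀ i, 0 ≤ Λ i := fun i => (hΛpos i).le
  obtain ⟨K, hK, hKmax⟩ := exists_max_image (Icc 1 n)
    (fun k => ∑ i ∈ range n, stepPoint Λ k i ^ q) ⟨1, mem_Icc.2 ⟨le_rfl, hn⟩⟩
  obtain ⟨hK₁, hKn⟩ := mem_Icc.1 hK
  refine ⟨fun i => stepPoint Λ K i, K, hK₁, hKn, fun i hi => if_pos hi,
    fun i hi => if_neg (Nat.not_lt.2 hi), fun i => stepPoint_nonneg hΛ₀ K i,
    fun i j hij => stepPoint_antitone hΛ₀ K hij, ?_, ?_⟩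
  · rw [Fin.sum_univ_eq_sum_range (fun i => stepPoint Λ K i / Λ i),
      sum_stepPoint_div hΛpos hK₁ hKn]
  · intro y hy₀ hy_anti hy
    rw [sum_zeroExtend (fun i t => t / Λ i)] at hy
    rw [sum_zeroExtend (fun _ t => t ^ q),
      Fin.sum_univ_eq_sum_range (fun i => stepPoint Λ K i ^ q)]
    exact sum_rpow_le_of_forall_sum_rpow_stepPoint_le hq hΛpos
      (antitone_zeroExtend hy₀ hy_anti) (fun _ => zeroExtend_of_le y) hy
      (sum_nonneg fun i _ => Real.rpow_nonneg (stepPoint_nonneg hΛ₀ K i) q) hKmax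

/-- For `q ≥ 1` and `n ≥ 1`, the maximum of `F(x) = ∑ xᵢ^q` over
nonincreasing nonnegative tuples with `∑ xᵢ/λᵢ ≤ 1` is attained at a point of the
form `x₁ = ⋯ = x_k = 1/(∑_{j=1}^k 1/λ_j)`, `x_{k+1} = ⋯ = x_n = 0`, for some `1 ≤ k ≤ n`. -/
theorem stmt0 (q : ℝ) (hq : 1 ≤ q) (n : ℕ) (hn : 1 ≤ n)
    (Λ : ℕ → ℝ) (hΛpos : ∀ i, 0 < Λ i) (hΛmono : Monotone Λ) :
    ∃ (x : Fin n → ℝ) (k : ℕ), 1 ≤ k ∧ k ≤ n ∧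
      (∀ i : Fin n, (i : ℕ) < k → x i = 1 / ∑ j ∈ Finset.range k, 1 / Λ j) ∧
      (∀ i : Fin n, k ≤ (i : ℕ) → x i = 0) ∧
      (∀ i : Fin n, 0 ≤ x i) ∧
      (∀ i j : Fin n, i ≤ j → x j ≤ x i) ∧
      (∑ i, x i / Λ (i : ℕ)) ≤ 1 ∧
      (∀ y : Fin n → ℝ,
        (∀ i, 0 ≤ y i) → (∀ i j : Fin n, i ≤ j → y j ≤ y i) →
        (∑ i, y i / Λ (i : ℕ)) ≤ 1 →
        (∑ i, (y i) ^ q) ≤ ∑ i, (x i) ^ q) :=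
  stmt0_general q hq n hn Λ hΛpos
end

section
/- Let q ≥ 1 and n ≥ 1. The maximum of Σ_{i=1}^n x_i^q over all x with x_1 ≥ x_2 ≥ ... ≥ x_n ≥ 0 and Σ_{i=1}^n x_i/λ_i ≤ 1 equals max_{1 ≤ k ≤ n} k/(Σ_{j=1}^k 1/λ_j)^q. -/
lemma aux_flip (x y u v : ℝ) : (x - y)/(u - v) = (y - x)/(v - u) := by
  rw [← neg_div_neg_eq]; ring_nf

lemma aux_conv {q : ℝ} (hq : 1 ≤ q) {a b c : ℝ} (ha : 0 ≤ a) (hab : a ≤ b) (hc : 0 ≤ c) :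
    (a + c) ^ q - a ^ q ≤ (b + c) ^ q - b ^ q := by
  rcases hc.eq_or_lt with rfl | hc
  · simp
  have hb : 0 ≤ b := ha.trans hab
  have hconv := convexOn_rpow hq
  have key1 := hconv.secant_mono (Set.mem_Ici.2 ha)
    (Set.mem_Ici.2 (by linarith : (0:ℝ) ≤ a + c)) (Set.mem_Ici.2 (by linarith : (0:ℝ) ≤ b + c))
    (ne_of_gt (by linarith)) (ne_of_gt (by linarith)) (by linarith : a + c ≤ b + c)
  have key2 := hconv.secant_mono (Set.mem_Ici.2 (by linarith : (0:ℝ) ≤ b + c))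
    (Set.mem_Ici.2 ha) (Set.mem_Ici.2 hb)
    (ne_of_lt (by linarith)) (ne_of_lt (by linarith)) hab
  rw [aux_flip, aux_flip (b^q)] at key2
  have e1 : a + c - a = c := by ring
  have e2 : b + c - b = c := by ring
  rw [e1] at key1
  rw [e2] at key2
  exact (div_le_div_iff_of_pos_right hc).mp (key1.trans key2)

/-- For `q ≥ 1` and `n ≥ 1`, the maximum of `∑ xᵢ^q` over nonincreasing
nonnegative tuples with `∑ xᵢ/λᵢ ≤ 1` equals `max_{1 ≤ k ≤ n} k/(∑_{j=1}^k 1/λ_j)^q`. -/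
theorem stmt1 (q : ℝ) (hq : 1 ≤ q) (n : ℕ) (hn : 1 ≤ n)
    (Λ : ℕ → ℝ) (hΛpos : ∀ i, 0 < Λ i) (hΛmono : Monotone Λ) :
    IsGreatest
      {v : ℝ | ∃ x : Fin n → ℝ,
        (∀ i, 0 ≤ x i) ∧ (∀ i j : Fin n, i ≤ j → x j ≤ x i) ∧
        (∑ i, x i / Λ (i : ℕ)) ≤ 1 ∧ v = ∑ i, (x i) ^ q}
      (sSup {v : ℝ | ∃ k : ℕ, 1 ≤ k ∧ k ≤ n ∧
        v = (k : ℝ) / (∑ j ∈ Finset.range k, 1 / Λ j) ^ q}) := by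
  have hq0 : (0:ℝ) < q := lt_of_lt_of_le one_pos hq
  set a : ℕ → ℝ := fun i => 1 / Λ i with ha_def
  set A : ℕ → ℝ := fun k => ∑ j ∈ Finset.range k, a j with hA_def
  have ha_pos : ∀ i, 0 < a i := fun i => one_div_pos.mpr (hΛpos i)
  have hA_succ : ∀ k, A (k+1) = A k + a k := fun k => Finset.sum_range_succ a k
  have hA_pos : ∀ k, 1 ≤ k → 0 < A k := by
    intro k hk
    apply Finset.sum_pos (fun i _ => ha_pos i)
    exact ⟨0, Finset.mem_range.2 hk⟩
  have hA_mono : Monotone A := by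
    intro i j hij
    exact Finset.sum_le_sum_of_subset_of_nonneg (Finset.range_subset_range.2 hij)
      (fun i _ _ => (ha_pos i).le)
  set Tset : Set ℝ := {v : ℝ | ∃ k : ℕ, 1 ≤ k ∧ k ≤ n ∧
      v = (k : ℝ) / (∑ j ∈ Finset.range k, 1 / Λ j) ^ q} with hTset_def
  have hTsub : Tset ⊆ (fun k : ℕ => (k : ℝ) / (A k) ^ q) '' (Set.Icc 1 n) := by
    rintro v ⟨k, hk1, hkn, rfl⟩
    exact ⟨k, ⟨hk1, hkn⟩, rfl⟩
  have hTfin : Tset.Finite := ((Set.finite_Icc 1 n).image _).subset hTsub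
  have hT1 : ((1:ℕ):ℝ) / (∑ j ∈ Finset.range 1, 1 / Λ j) ^ q ∈ Tset := ⟨1, le_rfl, hn, rfl⟩
  have hTne : Tset.Nonempty := ⟨_, hT1⟩
  have hTbdd : BddAbove Tset := hTfin.bddAbove
  set M : ℝ := sSup Tset with hM_def
  have hub : ∀ k : ℕ, 1 ≤ k → k ≤ n → (k : ℝ) / (A k) ^ q ≤ M := by
    intro k hk1 hkn
    exact le_csSup hTbdd ⟨k, hk1, hkn, rfl⟩
  have hM0 : 0 ≤ M := by
    refine le_trans ?_ (le_csSup hTbdd hT1)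
    have h1 : (0:ℝ) ≤ ∑ j ∈ Finset.range 1, 1 / Λ j :=
      Finset.sum_nonneg fun j _ => (one_div_pos.mpr (hΛpos j)).le
    exact div_nonneg (by norm_num) (Real.rpow_nonneg h1 q)
  constructor
  · -- membership: M ∈ S
    obtain ⟨k₀, hk1, hkn, hMe⟩ := hTne.csSup_mem hTfin
    have hAk : 0 < A k₀ := hA_pos k₀ hk1
    have hAe : (∑ j ∈ Finset.range k₀, 1 / Λ j) = A k₀ := rfl
    refine ⟨fun i => if (i : ℕ) < k₀ then 1 / A k₀ else 0, ?_, ?_, ?_, ?_⟩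
    · intro i; dsimp only; split
      · exact div_nonneg zero_le_one hAk.le
      · exact le_rfl
    · intro i j hij; dsimp only
      by_cases hj : (j : ℕ) < k₀
      · rw [if_pos hj, if_pos (lt_of_le_of_lt (show (i:ℕ) ≤ (j:ℕ) from hij) hj)]
      · rw [if_neg hj]; split
        · exact div_nonneg zero_le_one hAk.le
        · exact le_rfl
    · rw [show (∑ i : Fin n,
          (fun i : Fin n => if (i:ℕ) < k₀ then 1 / A k₀ else 0) i / Λ (i:ℕ))
          = ∑ m ∈ Finset.range n, (if m < k₀ then 1 / A k₀ else 0) / Λ m from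
          Fin.sum_univ_eq_sum_range (fun m : ℕ => (if m < k₀ then 1 / A k₀ else 0) / Λ m) n]
      have hpt : ∀ m, ((if m < k₀ then 1 / A k₀ else 0) / Λ m)
          = (if m < k₀ then 1 / A k₀ * a m else 0) := by
        intro m; split
        · rw [div_eq_mul_one_div]
        · exact zero_div _
      rw [Finset.sum_congr rfl fun m _ => hpt m,
        ← Finset.sum_subset (Finset.range_subset_range.2 hkn)
          (fun m _ hm => if_neg fun h => hm (Finset.mem_range.2 h)),
        Finset.sum_congr rfl (fun m hm => if_pos (Finset.mem_range.1 hm)),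
        ← Finset.mul_sum]
      rw [show (∑ j ∈ Finset.range k₀, a j) = A k₀ from rfl, one_div,
        inv_mul_cancel₀ (ne_of_gt hAk)]
    · rw [hM_def, hMe, hAe]
      rw [show (∑ i : Fin n, ((fun i : Fin n => if (i:ℕ) < k₀ then 1 / A k₀ else 0) i) ^ q)
          = ∑ m ∈ Finset.range n, (if m < k₀ then 1 / A k₀ else 0) ^ q from
          Fin.sum_univ_eq_sum_range (fun m : ℕ => (if m < k₀ then 1 / A k₀ else 0) ^ q) n]
      have hpt : ∀ m, ((if m < k₀ then 1 / A k₀ else 0) ^ q : ℝ)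
          = (if m < k₀ then (1 / A k₀) ^ q else 0) := by
        intro m; split
        · rfl
        · exact Real.zero_rpow (ne_of_gt hq0)
      rw [Finset.sum_congr rfl fun m _ => hpt m,
        ← Finset.sum_subset (Finset.range_subset_range.2 hkn)
          (fun m _ hm => if_neg fun h => hm (Finset.mem_range.2 h)),
        Finset.sum_congr rfl (fun m hm => if_pos (Finset.mem_range.1 hm)),
        Finset.sum_const, Finset.card_range, nsmul_eq_mul,
        Real.div_rpow zero_le_one hAk.le, Real.one_rpow, mul_one_div]
  · -- upper bound
    rintro v ⟨x, hx0, hxmono, hxsum, rfl⟩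
    set y : ℕ → ℝ := fun i => if h : i < n then x ⟨i, h⟩ else 0 with hy_def
    have hy0 : ∀ i, 0 ≤ y i := by
      intro i; simp only [hy_def]; split
      · exact hx0 _
      · exact le_rfl
    have hymono : ∀ i j : ℕ, i ≤ j → y j ≤ y i := by
      intro i j hij; simp only [hy_def]
      split
      · rename_i hj
        have hi : i < n := lt_of_le_of_lt hij hj
        rw [dif_pos hi]
        exact hxmono ⟨i, hi⟩ ⟨j, hj⟩ hij
      · split
        · exact hx0 _
        · exact le_rfl
    have hyn : ∀ i, n ≤ i → y i = 0 := by
      intro i hi; simp only [hy_def]; rw [dif_neg (Nat.not_lt.2 hi)]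
    set T : ℕ → ℝ := fun k => ∑ i ∈ Finset.Ico k n, (y i - y (i+1)) * A (i+1) with hT_def
    have key : ∀ m k : ℕ, k + m = n →
        (T k = (∑ i ∈ Finset.Ico k n, y i * a i) + y k * A k) ∧
        (A (k+1) * y k ≤ T k) ∧
        ((∑ i ∈ Finset.Ico k n, (y i) ^ q) + (k : ℝ) * (y k) ^ q ≤ M * (T k) ^ q) := by
      intro m
      induction m with
      | zero =>
        intro k hk
        have hk' : k = n := by omega
        subst hk'
        have hTn : T k = 0 := by simp [hT_def]
        have hyk : y k = 0 := hyn k le_rfl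
        refine ⟨by simp [hTn, hyk], by simp [hTn, hyk], ?_⟩
        rw [hTn, hyk, Real.zero_rpow (ne_of_gt hq0)]
        simp
      | succ m ih =>
        intro k hk
        have hkn : k < n := by omega
        obtain ⟨ih1, ih2, ih3⟩ := ih (k+1) (by omega)
        have hstep : ∀ f : ℕ → ℝ,
            ∑ i ∈ Finset.Ico k n, f i = f k + ∑ i ∈ Finset.Ico (k+1) n, f i :=
          fun f => Finset.sum_eq_sum_Ico_succ_bot hkn f
        have hTk : T k = (y k - y (k+1)) * A (k+1) + T (k+1) := hstep _
        have hyk1 : y (k+1) ≤ y k := hymono k (k+1) (Nat.le_succ k)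
        have hApos : 0 < A (k+1) := hA_pos (k+1) (Nat.le_add_left 1 k)
        have hA12 : A (k+1) ≤ A (k+2) := hA_mono (Nat.le_succ (k+1))
        have hT1ge : A (k+1) * y (k+1) ≤ T (k+1) :=
          le_trans (mul_le_mul_of_nonneg_right hA12 (hy0 (k+1))) ih2
        have hTge : A (k+1) * y k ≤ T k := by
          rw [hTk]; nlinarith [hy0 (k+1)]
        refine ⟨?_, hTge, ?_⟩
        · rw [hTk, ih1, hstep (fun i => y i * a i), hA_succ k]; ring
        · have hconv := aux_conv hq (mul_nonneg hApos.le (hy0 (k+1))) hT1ge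
            (mul_nonneg (sub_nonneg.2 hyk1) hApos.le)
          have e1 : A (k+1) * y (k+1) + (y k - y (k+1)) * A (k+1) = A (k+1) * y k := by ring
          have e2 : T (k+1) + (y k - y (k+1)) * A (k+1) = T k := by rw [hTk]; ring
          rw [e1, e2] at hconv
          have h2 : (A (k+1) * y k) ^ q = A (k+1) ^ q * (y k) ^ q :=
            Real.mul_rpow hApos.le (hy0 k)
          have h3 : (A (k+1) * y (k+1)) ^ q = A (k+1) ^ q * (y (k+1)) ^ q :=
            Real.mul_rpow hApos.le (hy0 (k+1))
          have h4 : ((k:ℝ) + 1) ≤ M * A (k+1) ^ q := by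
            have hAq : 0 < A (k+1) ^ q := Real.rpow_pos_of_pos hApos q
            have := hub (k+1) (Nat.le_add_left 1 k) hkn
            rw [div_le_iff₀ hAq] at this
            push_cast at this ⊢
            linarith
          have h5 : (y (k+1)) ^ q ≤ (y k) ^ q :=
            Real.rpow_le_rpow (hy0 (k+1)) hyk1 hq0.le
          have h6 : M * (A (k+1) ^ q * ((y k) ^ q - (y (k+1)) ^ q))
              ≤ M * ((T k) ^ q - (T (k+1)) ^ q) := by
            apply mul_le_mul_of_nonneg_left _ hM0
            rw [mul_sub, ← h2, ← h3]; linarith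
          have h7 : ((k:ℝ) + 1) * ((y k) ^ q - (y (k+1)) ^ q)
              ≤ M * (A (k+1) ^ q * ((y k) ^ q - (y (k+1)) ^ q)) := by
            have := mul_le_mul_of_nonneg_right h4 (sub_nonneg.2 h5)
            rw [mul_assoc] at this
            exact this
          rw [hstep (fun i => (y i) ^ q)]
          push_cast at ih3 ⊢
          linarith
    obtain ⟨k1, _, k3⟩ := key n 0 (zero_add n)
    have hT0 : T 0 = ∑ i ∈ Finset.Ico 0 n, y i * a i := by
      rw [k1]; norm_num [hA_def]
    have hT0le : T 0 ≤ 1 := by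
      rw [hT0]
      have heq : ∑ i ∈ Finset.Ico 0 n, y i * a i = ∑ i : Fin n, x i / Λ (i : ℕ) := by
        rw [← Finset.range_eq_Ico,
          ← Fin.sum_univ_eq_sum_range (fun m : ℕ => y m * a m) n]
        apply Finset.sum_congr rfl
        intro i _
        simp only [hy_def, ha_def]
        rw [dif_pos i.isLt, Fin.eta, mul_one_div]
      rw [heq]; exact hxsum
    have hT0nn : 0 ≤ T 0 := by
      rw [hT0]
      exact Finset.sum_nonneg (fun i _ => mul_nonneg (hy0 i) (ha_pos i).le)
    have hT0q : (T 0) ^ q ≤ 1 := Real.rpow_le_one hT0nn hT0le hq0.le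
    have hfin : ∑ i ∈ Finset.Ico 0 n, (y i) ^ q ≤ M := by
      simp only [Nat.cast_zero, zero_mul, add_zero] at k3
      calc ∑ i ∈ Finset.Ico 0 n, (y i) ^ q ≤ M * (T 0) ^ q := k3
        _ ≤ M * 1 := mul_le_mul_of_nonneg_left hT0q hM0
        _ = M := mul_one M
    have heq2 : ∑ i : Fin n, (x i) ^ q = ∑ i ∈ Finset.Ico 0 n, (y i) ^ q := by
      rw [← Finset.range_eq_Ico, ← Fin.sum_univ_eq_sum_range (fun m : ℕ => (y m) ^ q) n]
      apply Finset.sum_congr rfl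
      intro i _
      simp only [hy_def]
      rw [dif_pos i.isLt, Fin.eta]
    rw [heq2]
    exact hfin
end

section
/- Let 0 < q < 1 and n ≥ 1. For all x with x_1 ≥ x_2 ≥ ... ≥ x_n ≥ 0 and Σ_{i=1}^n x_i/λ_i ≤ 1, one has Σ_{i=1}^n x_i^q ≤ n/(Σ_{j=1}^n 1/λ_j)^q, with equality when each x_i = 1/(Σ_{j=1}^n 1/λ_j). Moreover n/(Σ_{j=1}^n 1/λ_j)^q = max_{1 ≤ k ≤ n} k/(Σ_{j=1}^k 1/λ_j)^q. -/
open Finset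

private lemma Spos {n : ℕ} (hn : 1 ≤ n) {Λ : ℕ → ℝ} (hΛpos : ∀ i, 0 < Λ i) :
    0 < ∑ j ∈ Finset.range n, 1 / Λ j :=
  Finset.sum_pos (fun j _ => one_div_pos.mpr (hΛpos j))
    (by rw [Finset.nonempty_range_iff]; omega)

private lemma ratio_step (q : ℝ) (hq0 : 0 < q) (hq1 : q < 1)
    (Λ : ℕ → ℝ) (hΛpos : ∀ i, 0 < Λ i) (hΛmono : Monotone Λ) (k : ℕ) (hk : 1 ≤ k) :
    (k : ℝ) / (∑ j ∈ Finset.range k, 1 / Λ j) ^ q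
      ≤ ((k : ℝ) + 1) / (∑ j ∈ Finset.range (k + 1), 1 / Λ j) ^ q := by
  set S := ∑ j ∈ Finset.range k, 1 / Λ j with hS
  have hSpos : 0 < S := Spos hk hΛpos
  have hkpos : (0 : ℝ) < k := by exact_mod_cast hk
  have hΛk : 0 < 1 / Λ k := one_div_pos.mpr (hΛpos k)
  have hSlow : (k : ℝ) * (1 / Λ k) ≤ S := by
    calc (k : ℝ) * (1 / Λ k) = ∑ _j ∈ Finset.range k, 1 / Λ k := by
          rw [Finset.sum_const, Finset.card_range, nsmul_eq_mul]
      _ ≤ S := Finset.sum_le_sum fun j hj =>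
          one_div_le_one_div_of_le (hΛpos j) (hΛmono (Finset.mem_range.mp hj).le)
  have hSsucc : ∑ j ∈ Finset.range (k + 1), 1 / Λ j = S + 1 / Λ k := by
    rw [Finset.sum_range_succ, hS]
  have hub : S + 1 / Λ k ≤ S * ((k + 1) / k) := by
    have h1 : 1 / Λ k ≤ S / k := by
      rw [le_div_iff₀ hkpos]; linarith
    have h2 : S * ((k + 1) / k) = S + S / k := by field_simp
    linarith
  have hS1pos : 0 < S + 1 / Λ k := by linarith
  have key : (S + 1 / Λ k) ^ q ≤ S ^ q * ((k + 1) / k) := by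
    calc (S + 1 / Λ k) ^ q ≤ (S * ((k + 1) / k)) ^ q :=
          Real.rpow_le_rpow hS1pos.le hub hq0.le
      _ = S ^ q * ((k + 1) / k) ^ q := Real.mul_rpow hSpos.le (by positivity)
      _ ≤ S ^ q * ((k + 1) / k) := by
          have h1 : (1 : ℝ) ≤ (k + 1) / k := by
            rw [le_div_iff₀ hkpos]; linarith
          have h2 := Real.rpow_le_rpow_of_exponent_le h1 hq1.le
          rw [Real.rpow_one] at h2
          exact mul_le_mul_of_nonneg_left h2 (Real.rpow_nonneg hSpos.le _)
  rw [hSsucc, div_le_div_iff₀ (by positivity) (by positivity)]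
  calc (k : ℝ) * (S + 1 / Λ k) ^ q ≤ k * (S ^ q * ((k + 1) / k)) :=
        mul_le_mul_of_nonneg_left key hkpos.le
    _ = ((k : ℝ) + 1) * S ^ q := by field_simp

private lemma ratio_mono (q : ℝ) (hq0 : 0 < q) (hq1 : q < 1)
    (Λ : ℕ → ℝ) (hΛpos : ∀ i, 0 < Λ i) (hΛmono : Monotone Λ) {k n : ℕ} (hk : 1 ≤ k)
    (hkn : k ≤ n) :
    (k : ℝ) / (∑ j ∈ Finset.range k, 1 / Λ j) ^ q
      ≤ (n : ℝ) / (∑ j ∈ Finset.range n, 1 / Λ j) ^ q := by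
  induction n, hkn using Nat.le_induction with
  | base => exact le_rfl
  | succ m hm ih =>
      refine ih.trans ?_
      have := ratio_step q hq0 hq1 Λ hΛpos hΛmono m (le_trans hk hm)
      push_cast
      exact this

/-- For `0 < q < 1` and `n ≥ 1`, every feasible tuple satisfies
`∑ xᵢ^q ≤ n/(∑_{j=1}^n 1/λ_j)^q`, with equality when each `xᵢ = 1/(∑_{j=1}^n 1/λ_j)`;
moreover this value equals `max_{1 ≤ k ≤ n} k/(∑_{j=1}^k 1/λ_j)^q`. -/
theorem stmt2 (q : ℝ) (hq0 : 0 < q) (hq1 : q < 1) (n : ℕ) (hn : 1 ≤ n)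
    (Λ : ℕ → ℝ) (hΛpos : ∀ i, 0 < Λ i) (hΛmono : Monotone Λ) :
    (∀ x : Fin n → ℝ,
      (∀ i, 0 ≤ x i) → (∀ i j : Fin n, i ≤ j → x j ≤ x i) →
      (∑ i, x i / Λ (i : ℕ)) ≤ 1 →
      (∑ i, (x i) ^ q) ≤ (n : ℝ) / (∑ j ∈ Finset.range n, 1 / Λ j) ^ q) ∧
    (∑ _i : Fin n, ((1 : ℝ) / ∑ j ∈ Finset.range n, 1 / Λ j) ^ q)
      = (n : ℝ) / (∑ j ∈ Finset.range n, 1 / Λ j) ^ q ∧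
    IsGreatest
      {v : ℝ | ∃ k : ℕ, 1 ≤ k ∧ k ≤ n ∧
        v = (k : ℝ) / (∑ j ∈ Finset.range k, 1 / Λ j) ^ q}
      ((n : ℝ) / (∑ j ∈ Finset.range n, 1 / Λ j) ^ q) := by
  set S := ∑ j ∈ Finset.range n, 1 / Λ j with hS
  have hSpos : 0 < S := Spos hn hΛpos
  have hnpos : (0 : ℝ) < n := by exact_mod_cast hn
  refine ⟨?_, ?_, ?_⟩
  · -- main inequality
    intro x hx0 hxmono hxcon
    have hmono : Monovary x (fun i : Fin n => 1 / Λ (i : ℕ)) := by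
      intro i j hij
      simp only at hij
      have hji : (j : ℕ) < (i : ℕ) := by
        by_contra h
        push_neg at h
        have h1 := one_div_le_one_div_of_le (hΛpos (i : ℕ)) (hΛmono h)
        linarith
      exact hxmono j i (Fin.le_def.mpr hji.le)
    have hcheb := hmono.sum_mul_sum_le_card_mul_sum
    rw [Fintype.card_fin] at hcheb
    have hSfin : ∑ i : Fin n, 1 / Λ (i : ℕ) = S := by
      rw [hS]; exact Fin.sum_univ_eq_sum_range (fun j => 1 / Λ j) n
    have hprod : ∑ i : Fin n, x i * (1 / Λ (i : ℕ)) = ∑ i, x i / Λ (i : ℕ) := by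
      simp [div_eq_mul_inv]
    rw [hSfin, hprod] at hcheb
    have hsumx : (∑ i, x i) ≤ n / S := by
      rw [le_div_iff₀ hSpos]
      calc (∑ i, x i) * S ≤ n * ∑ i, x i / Λ (i : ℕ) := hcheb
        _ ≤ n * 1 := mul_le_mul_of_nonneg_left hxcon hnpos.le
        _ = n := mul_one _
    have hp : (1 : ℝ) ≤ 1 / q := by
      rw [le_div_iff₀ hq0, one_mul]; exact hq1.le
    have hzz : ∀ i : Fin n, ((x i) ^ q) ^ (1 / q : ℝ) = x i := by
      intro i
      rw [← Real.rpow_mul (hx0 i), mul_one_div, div_self hq0.ne', Real.rpow_one]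
    have hpm := Real.arith_mean_le_rpow_mean Finset.univ (fun _ : Fin n => 1 / (n : ℝ))
      (fun i => (x i) ^ q) (fun _ _ => by positivity)
      (by rw [Finset.sum_const, Finset.card_univ, Fintype.card_fin, nsmul_eq_mul]; field_simp)
      (fun i _ => Real.rpow_nonneg (hx0 i) q) hp
    simp only [one_div_one_div] at hpm
    have heq : ∑ i : Fin n, 1 / (n : ℝ) * ((x i) ^ q) ^ (1 / q : ℝ)
        = ∑ i : Fin n, 1 / (n : ℝ) * x i :=
      Finset.sum_congr rfl fun i _ => by rw [hzz i]
    rw [heq] at hpm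
    have h2 : ∑ i : Fin n, 1 / (n : ℝ) * x i ≤ 1 / S := by
      rw [← Finset.mul_sum]
      calc 1 / (n : ℝ) * ∑ i, x i ≤ 1 / (n : ℝ) * (n / S) :=
            mul_le_mul_of_nonneg_left hsumx (by positivity)
        _ = 1 / S := by field_simp
    have h3 : (∑ i : Fin n, 1 / (n : ℝ) * x i) ^ q ≤ (1 / S) ^ q :=
      Real.rpow_le_rpow (Finset.sum_nonneg fun i _ => by
        have := hx0 i; positivity) h2 hq0.le
    have h4 : ∑ i : Fin n, 1 / (n : ℝ) * (x i) ^ q ≤ (1 / S) ^ q := le_trans hpm h3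
    calc (∑ i, (x i) ^ q) = n * ∑ i : Fin n, 1 / (n : ℝ) * (x i) ^ q := by
          rw [Finset.mul_sum]
          exact Finset.sum_congr rfl fun i _ => by field_simp
      _ ≤ n * (1 / S) ^ q := mul_le_mul_of_nonneg_left h4 hnpos.le
      _ = n / S ^ q := by
          rw [Real.div_rpow (by norm_num) hSpos.le, Real.one_rpow, mul_one_div]
  · rw [Finset.sum_const, Finset.card_univ, Fintype.card_fin, nsmul_eq_mul,
      Real.div_rpow (by norm_num) hSpos.le, Real.one_rpow, mul_one_div]
  · constructor
    · exact ⟨n, hn, le_refl n, rfl⟩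
    · rintro v ⟨k, hk1, hkn, rfl⟩
      exact ratio_mono q hq0 hq1 Λ hΛpos hΛmono hk1 hkn
end

section
/- Let p, q ∈ [1, ∞), let Λ = (λ_i) be a nondecreasing sequence of positive reals with Σ 1/λ_i = ∞, and let f : [0,1] → ℝ be of bounded p-Λ-variation with total p-Λ-variation V(f). Then for every n ≥ 1, ω_q(1/n, f)^q ≤ V(f)^q · (1/n) · max_{1 ≤ k ≤ n} k/(Σ_{i=1}^k 1/λ_i)^{q/p}. -/
open MeasureTheory

/-- The set of candidate sums defining the p-Λ-variation of `f` on `[0,1]`: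
values `(∑ᵢ |f(bᵢ) - f(aᵢ)|^p / λᵢ)^{1/p}` over finite families of
nonoverlapping subintervals `[aᵢ, bᵢ] ⊆ [0,1]`. -/
def varSet (p : ℝ) (Λ : ℕ → ℝ) (f : ℝ → ℝ) : Set ℝ :=
  {v : ℝ | ∃ (n : ℕ) (a b : Fin n → ℝ),
    (∀ i, 0 ≤ a i ∧ a i ≤ b i ∧ b i ≤ 1) ∧
    (∀ i j, i ≠ j → b i ≤ a j ∨ b j ≤ a i) ∧
    v = (∑ i, |f (b i) - f (a i)| ^ p / Λ (i : ℕ)) ^ (1 / p)}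

/-- The p-Λ-variation `V(f)` of `f` on `[0,1]`. -/
noncomputable def pVar (p : ℝ) (Λ : ℕ → ℝ) (f : ℝ → ℝ) : ℝ :=
  sSup (varSet p Λ f)

/-- `f` belongs to the Waterman–Shiba class `ΛBV^{(p)}` on `[0,1]`. -/
def MemWS (p : ℝ) (Λ : ℕ → ℝ) (f : ℝ → ℝ) : Prop :=
  BddAbove (varSet p Λ f)

/-- The integral modulus of continuity
`ω_q(δ, f) = sup_{0 ≤ γ ≤ δ} (∫₀^{1-γ} |f(t+γ) - f(t)|^q dt)^{1/q}`. -/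
noncomputable def omegaq (q : ℝ) (f : ℝ → ℝ) (δ : ℝ) : ℝ :=
  sSup {v : ℝ | ∃ γ : ℝ, 0 ≤ γ ∧ γ ≤ δ ∧
    v = (∫ t in (0:ℝ)..(1 - γ), |f (t + γ) - f t| ^ q) ^ (1 / q)}

/-- `f` belongs to `H_ω^q`: `f ∈ L^q[0,1]` and `ω_q(δ, f) = O(ω(δ))` as `δ → 0+`. -/
def MemH (q : ℝ) (ω : ℝ → ℝ) (f : ℝ → ℝ) : Prop :=
  MemLp f (ENNReal.ofReal q) (volume.restrict (Set.Icc (0:ℝ) 1)) ∧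
  ∃ C : ℝ, ∃ δ₀ : ℝ, 0 < δ₀ ∧ ∀ δ : ℝ, 0 < δ → δ ≤ δ₀ → omegaq q f δ ≤ C * ω δ

/-! For `0 < γ ≤ 1/n`, cut `[0, 1 - γ]` into pieces of length `γ` and stack them over `[0, γ]`:
for each `u` the integrand becomes a sum of `|f (u + jγ + γ) - f (u + jγ)| ^ q` over at most
`1/γ` nonoverlapping intervals. After sorting these increments decreasingly, put
`yᵢ = |Δᵢ| ^ p`, `wᵢ = 1/λᵢ`, `r = q/p` and `W k = ∑_{i<k} wᵢ`; then the sum is `∑ yᵢ ^ r` and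
`∑ yᵢ wᵢ ≤ V(f) ^ p`, so it suffices that `∑ yᵢ ^ r ≤ (∑ yᵢ wᵢ) ^ r · max_k k / (W k) ^ r`.
For `r ≤ 1` this is the power mean inequality plus Chebyshev's sum inequality; for `r ≥ 1`
Abel summation writes `y` as a combination of the step vectors `1_{[0,k)} / W k` with total
weight `∑ yᵢ wᵢ`, and convexity of `x ↦ x ^ r` reduces to these vectors. Finally
`γ · k / (W k) ^ r ≤ (1/n) · max_{k ≤ n} k / (W k) ^ r` whenever `kγ ≤ 1`, since `W` increases. -/

open Finset

section WeightedSums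

variable {y w : ℕ → ℝ} {m : ℕ} {r : ℝ}

lemma sum_range_sub_succ_mul_sum_range_succ (y w : ℕ → ℝ) (m : ℕ) :
    ∑ k ∈ range m, (y k - y (k + 1)) * ∑ i ∈ range (k + 1), w i
      = ∑ i ∈ range m, y i * w i - y m * ∑ i ∈ range m, w i := by
  induction m with
  | zero => simp
  | succ m ih => rw [sum_range_succ, ih, sum_range_succ, sum_range_succ]; ring

lemma rpow_sum_mul_le_of_one_le {ι : Type*} (s : Finset ι) (hr : 1 ≤ r) {t a : ι → ℝ}
    (ht : ∀ i, 0 ≤ t i) (ha : ∀ i, 0 ≤ a i) :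
    (∑ i ∈ s, t i * a i) ^ r ≤ (∑ i ∈ s, t i) ^ (r - 1) * ∑ i ∈ s, t i * a i ^ r := by
  have hr0 : r ≠ 0 := by positivity
  have hT : 0 ≤ ∑ i ∈ s, t i := sum_nonneg fun i _ => ht i
  have hS : 0 ≤ ∑ i ∈ s, t i * a i ^ r :=
    sum_nonneg fun i _ => mul_nonneg (ht i) (Real.rpow_nonneg (ha i) r)
  calc (∑ i ∈ s, t i * a i) ^ r
      ≤ ((∑ i ∈ s, t i) ^ (1 - r⁻¹) * (∑ i ∈ s, t i * a i ^ r) ^ r⁻¹) ^ r :=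
        Real.rpow_le_rpow (sum_nonneg fun i _ => mul_nonneg (ht i) (ha i))
          (Real.inner_le_weight_mul_Lp_of_nonneg s hr t a ht ha) (by positivity)
    _ = (∑ i ∈ s, t i) ^ (r - 1) * ∑ i ∈ s, t i * a i ^ r := by
        rw [Real.mul_rpow (by positivity) (by positivity), ← Real.rpow_mul hT,
          ← Real.rpow_mul hS, inv_mul_cancel₀ hr0, Real.rpow_one, sub_mul, one_mul,
          inv_mul_cancel₀ hr0]

lemma sum_rpow_le_of_le_one (hr0 : 0 < r) (hr1 : r ≤ 1) (hy0 : ∀ i, 0 ≤ y i) (hy : Antitone y)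
    (hw0 : ∀ i, 0 < w i) (hw : Antitone w) (hm : 1 ≤ m) :
    ∑ i ∈ range m, y i ^ r
      ≤ (∑ i ∈ range m, y i * w i) ^ r * (m / (∑ i ∈ range m, w i) ^ r) := by
  set A := ∑ i ∈ range m, y i * w i
  set W := ∑ i ∈ range m, w i
  have hW : 0 < W := sum_pos (fun i _ => hw0 i) (nonempty_range_iff.mpr (by omega))
  have hm0 : (0 : ℝ) < m := by exact_mod_cast hm
  have hY : 0 ≤ ∑ i ∈ range m, y i := sum_nonneg fun i _ => hy0 i
  have hpower_mean : ∑ i ∈ range m, y i ^ r ≤ (m : ℝ) ^ (1 - r) * (∑ i ∈ range m, y i) ^ r := by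
    have h := Real.inner_le_weight_mul_Lp_of_nonneg (range m) (one_le_inv_iff₀.mpr ⟨hr0, hr1⟩)
      (fun _ => 1) (fun i => y i ^ r) (fun _ => zero_le_one) (fun i => Real.rpow_nonneg (hy0 i) r)
    simp only [one_mul, sum_const, card_range, nsmul_eq_mul, mul_one, inv_inv] at h
    simpa only [← Real.rpow_mul (hy0 _), mul_inv_cancel₀ hr0.ne', Real.rpow_one] using h
  have hchebyshev : (∑ i ∈ range m, y i) * W ≤ m * A := by
    simpa using ((hy.monovary hw).monovaryOn _).sum_mul_sum_le_card_mul_sum (s := range m)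
  have hA : 0 ≤ A := sum_nonneg fun i _ => mul_nonneg (hy0 i) (hw0 i).le
  calc ∑ i ∈ range m, y i ^ r ≤ (m : ℝ) ^ (1 - r) * (m * A / W) ^ r :=
        hpower_mean.trans (mul_le_mul_of_nonneg_left (Real.rpow_le_rpow hY
          ((le_div_iff₀ hW).mpr hchebyshev) hr0.le) (by positivity))
    _ = A ^ r * (m / W ^ r) := by
        rw [mul_div_assoc, Real.mul_rpow hm0.le (div_nonneg hA hW.le), Real.div_rpow hA hW.le,
          ← mul_assoc, ← Real.rpow_add hm0, sub_add_cancel, Real.rpow_one]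
        ring

lemma sum_rpow_le_of_one_le (hr : 1 ≤ r) (hy : Antitone y) (hym : y m = 0) (hw0 : ∀ i, 0 < w i)
    {C : ℝ} (hC : ∀ k, 1 ≤ k → k ≤ m → (k : ℝ) / (∑ i ∈ range k, w i) ^ r ≤ C) :
    ∑ i ∈ range m, y i ^ r ≤ (∑ i ∈ range m, y i * w i) ^ r * C := by
  set W : ℕ → ℝ := fun k => ∑ i ∈ range k, w i
  set A := ∑ i ∈ range m, y i * w i
  have hW : ∀ k, 0 < W (k + 1) := fun k => sum_pos (fun i _ => hw0 i) nonempty_range_add_one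
  set t : ℕ → ℝ := fun k => (y k - y (k + 1)) * W (k + 1)
  set a : ℕ → ℝ := fun k => (W (k + 1))⁻¹
  have ht : ∀ k, 0 ≤ t k := fun k => mul_nonneg (sub_nonneg.mpr (hy k.le_succ)) (hW k).le
  have ha : ∀ k, 0 ≤ a k := fun k => inv_nonneg.mpr (hW k).le
  have hsum_t : ∑ k ∈ range m, t k = A := by
    simp only [t, W, sum_range_sub_succ_mul_sum_range_succ, hym, zero_mul, sub_zero, A]
  have hA : 0 ≤ A := hsum_t ▸ sum_nonneg fun k _ => ht k
  have hy_eq : ∀ i ≤ m, y i = ∑ k ∈ Ico i m, t k * a k := by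
    intro i hi
    have htelescope : ∀ k, t k * a k = -(y (k + 1) - y k) := fun k => by
      simp only [t, a]; field_simp [(hW k).ne']; ring
    simp only [htelescope, sum_neg_distrib, sum_Ico_sub y hi, hym]
    ring
  have hjensen : ∀ i ∈ range m, y i ^ r ≤ A ^ (r - 1) * ∑ k ∈ Ico i m, t k * a k ^ r := by
    intro i hi
    rw [hy_eq i (mem_range.mp hi).le]
    refine (rpow_sum_mul_le_of_one_le _ hr ht ha).trans (mul_le_mul_of_nonneg_right ?_
      (sum_nonneg fun k _ => mul_nonneg (ht k) (Real.rpow_nonneg (ha k) r)))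
    refine Real.rpow_le_rpow (sum_nonneg fun k _ => ht k) ?_ (by linarith)
    exact hsum_t ▸ sum_le_sum_of_subset_of_nonneg (fun k hk => mem_range.mpr (mem_Ico.mp hk).2)
      fun k _ _ => ht k
  have hstep : ∀ k ∈ range m, (k + 1 : ℝ) * a k ^ r ≤ C := by
    intro k hk
    rw [Real.inv_rpow (hW k).le, ← div_eq_mul_inv]
    exact_mod_cast hC (k + 1) (by omega) (mem_range.mp hk)
  calc ∑ i ∈ range m, y i ^ r
      ≤ ∑ i ∈ range m, A ^ (r - 1) * ∑ k ∈ Ico i m, t k * a k ^ r := sum_le_sum hjensen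
    _ = A ^ (r - 1) * ∑ k ∈ range m, (k + 1 : ℝ) * (t k * a k ^ r) := by
        rw [← mul_sum, ← Nat.Ico_zero_eq_range, sum_Ico_Ico_comm]
        simp
    _ ≤ A ^ (r - 1) * ∑ k ∈ range m, t k * C := by
        refine mul_le_mul_of_nonneg_left (sum_le_sum fun k hk => ?_) (Real.rpow_nonneg hA _)
        rw [mul_left_comm]
        exact mul_le_mul_of_nonneg_left (hstep k hk) (ht k)
    _ = A ^ r * C := by
        rw [← sum_mul, hsum_t, ← mul_assoc, ← Real.rpow_add_one' hA (by linarith), sub_add_cancel]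

theorem sum_rpow_le_of_antitone (hr : 0 < r) (hy0 : ∀ i, 0 ≤ y i) (hy : Antitone y)
    (hym : y m = 0) (hw0 : ∀ i, 0 < w i) (hw : Antitone w) {C : ℝ}
    (hC : ∀ k, 1 ≤ k → k ≤ m → (k : ℝ) / (∑ i ∈ range k, w i) ^ r ≤ C) :
    ∑ i ∈ range m, y i ^ r ≤ (∑ i ∈ range m, y i * w i) ^ r * C := by
  rcases le_total r 1 with hr1 | hr1
  · rcases Nat.eq_zero_or_pos m with rfl | hm
    · simp [Real.zero_rpow hr.ne']
    · exact (sum_rpow_le_of_le_one hr hr1 hy0 hy hw0 hw hm).trans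
        (mul_le_mul_of_nonneg_left (hC m hm le_rfl)
          (Real.rpow_nonneg (sum_nonneg fun i _ => mul_nonneg (hy0 i) (hw0 i).le) r))
  · exact sum_rpow_le_of_one_le hr1 hy hym hw0 hC

lemma antitone_dite_lt {x : Fin m → ℝ} (hx : Antitone x) (hx0 : ∀ i, 0 ≤ x i) :
    Antitone fun i : ℕ => if h : i < m then x ⟨i, h⟩ else 0 := by
  intro i j hij
  dsimp only
  split_ifs with hj hi hi
  · exact hx (Fin.mk_le_mk.mpr hij)
  · omega
  · exact hx0 _
  · exact le_rfl

end WeightedSums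

def IsNonoverlappingInUnitInterval {ι : Type*} (a b : ι → ℝ) : Prop :=
  (∀ i, 0 ≤ a i ∧ a i ≤ b i ∧ b i ≤ 1) ∧ ∀ i j, i ≠ j → b i ≤ a j ∨ b j ≤ a i

lemma IsNonoverlappingInUnitInterval.comp {ι κ : Type*} {a b : ι → ℝ}
    (h : IsNonoverlappingInUnitInterval a b) {e : κ → ι} (he : Function.Injective e) :
    IsNonoverlappingInUnitInterval (a ∘ e) (b ∘ e) :=
  ⟨fun i => h.1 (e i), fun _ _ hij => h.2 _ _ (he.ne hij)⟩

section Variation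

variable {p q : ℝ} {Λ : ℕ → ℝ} {f : ℝ → ℝ}

lemma zero_mem_varSet (hp : p ≠ 0) : (0 : ℝ) ∈ varSet p Λ f :=
  ⟨0, Fin.elim0, Fin.elim0, fun i => i.elim0, fun i => i.elim0, by simp [hp]⟩

lemma pVar_nonneg (hp : p ≠ 0) (hf : MemWS p Λ f) : 0 ≤ pVar p Λ f :=
  le_csSup hf (zero_mem_varSet hp)

lemma sum_div_le_pVar_rpow (hp : 0 < p) (hΛ : ∀ i, 0 ≤ Λ i) (hf : MemWS p Λ f) {n : ℕ}
    {a b : Fin n → ℝ} (h : IsNonoverlappingInUnitInterval a b) :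
    ∑ i, |f (b i) - f (a i)| ^ p / Λ i ≤ pVar p Λ f ^ p := by
  have hS : 0 ≤ ∑ i, |f (b i) - f (a i)| ^ p / Λ i :=
    sum_nonneg fun i _ => div_nonneg (Real.rpow_nonneg (abs_nonneg _) p) (hΛ i)
  calc ∑ i, |f (b i) - f (a i)| ^ p / Λ i
      = ((∑ i, |f (b i) - f (a i)| ^ p / Λ i) ^ (1 / p)) ^ p := by
        rw [← Real.rpow_mul hS, one_div_mul_cancel hp.ne', Real.rpow_one]
    _ ≤ pVar p Λ f ^ p :=
        Real.rpow_le_rpow (Real.rpow_nonneg hS _) (le_csSup hf ⟨n, a, b, h.1, h.2, rfl⟩) hp.le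

theorem sum_abs_rpow_le_pVar_rpow_mul {ι : Type*} [Fintype ι] {a b : ι → ℝ}
    (h : IsNonoverlappingInUnitInterval a b) (hp : 0 < p) (hq : 0 < q) (hΛ : ∀ i, 0 < Λ i)
    (hΛm : Monotone Λ) (hf : MemWS p Λ f) {C : ℝ} (hC0 : 0 ≤ C)
    (hC : ∀ k, 1 ≤ k → k ≤ Fintype.card ι → (k : ℝ) / (∑ i ∈ range k, 1 / Λ i) ^ (q / p) ≤ C) :
    ∑ i, |f (b i) - f (a i)| ^ q ≤ pVar p Λ f ^ q * C := by
  set m := Fintype.card ι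
  set x : ι → ℝ := fun i => |f (b i) - f (a i)| ^ p
  have hx0 : ∀ i, 0 ≤ x i := fun i => Real.rpow_nonneg (abs_nonneg _) p
  set e : Fin m ≃ ι := (Fintype.equivFin ι).symm
  set σ : Fin m ≃ ι := (Tuple.sort fun i => -x (e i)).trans e
  have hσ : Antitone (x ∘ σ) := fun i j hij =>
    neg_le_neg_iff.mp (Tuple.monotone_sort (fun i => -x (e i)) hij)
  set y : ℕ → ℝ := fun i => if h : i < m then x (σ ⟨i, h⟩) else 0
  have hy0 : ∀ i, 0 ≤ y i := fun i => by
    simp only [y]; split_ifs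
    exacts [hx0 _, le_rfl]
  have hym : y m = 0 := dif_neg (lt_irrefl m)
  have hsum_y : ∀ F : ℕ → ℝ → ℝ, ∑ i ∈ range m, F i (y i) = ∑ i : Fin m, F i (x (σ i)) := by
    intro F
    rw [← Fin.sum_univ_eq_sum_range]
    simp [y]
  have hA : ∑ i ∈ range m, y i * (1 / Λ i) ≤ pVar p Λ f ^ p := by
    rw [hsum_y fun i v => v * (1 / Λ i)]
    simpa [x, div_eq_mul_inv] using
      sum_div_le_pVar_rpow hp (fun i => (hΛ i).le) hf (h.comp σ.injective)
  have hr : 0 < q / p := div_pos hq hp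
  calc ∑ i, |f (b i) - f (a i)| ^ q = ∑ i ∈ range m, y i ^ (q / p) := by
        rw [hsum_y fun _ v => v ^ (q / p), Equiv.sum_comp σ fun i => x i ^ (q / p)]
        simp only [x, ← Real.rpow_mul (abs_nonneg _), mul_div_cancel₀ _ hp.ne']
    _ ≤ (∑ i ∈ range m, y i * (1 / Λ i)) ^ (q / p) * C :=
        sum_rpow_le_of_antitone hr hy0 (antitone_dite_lt hσ fun i => hx0 _) hym
          (fun i => one_div_pos.mpr (hΛ i))
          (fun i j hij => one_div_le_one_div_of_le (hΛ i) (hΛm hij)) hC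
    _ ≤ (pVar p Λ f ^ p) ^ (q / p) * C :=
        mul_le_mul_of_nonneg_right (Real.rpow_le_rpow (sum_nonneg fun i _ =>
          mul_nonneg (hy0 i) (one_div_pos.mpr (hΛ i)).le) hA hr.le) hC0
    _ = pVar p Λ f ^ q * C := by
        rw [← Real.rpow_mul (pVar_nonneg hp.ne' hf), mul_div_cancel₀ _ hp.ne']

end Variation

theorem intervalIntegral_le_of_sum_translates_le {g : ℝ → ℝ} {L γ D : ℝ} (hL : 0 ≤ L)
    (hγ : 0 < γ) (hD : ∀ u ∈ Set.Icc 0 γ, ∀ J : Finset ℕ, (∀ j ∈ J, u + j * γ ≤ L) →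
      ∑ j ∈ J, g (u + j * γ) ≤ D) :
    ∫ t in (0)..L, g t ≤ γ * D := by
  have hD0 : 0 ≤ D := by simpa using hD 0 ⟨le_rfl, hγ.le⟩ ∅ (by simp)
  by_cases hg : IntervalIntegrable g volume 0 L
  swap
  · rw [intervalIntegral.integral_undef hg]; positivity
  set G := (Set.Iic L).indicator g
  set M := ⌈L / γ⌉₊
  have hGint : IntegrableOn G (Set.Ioi 0) := by
    rw [integrableOn_indicator_iff measurableSet_Iic, Set.Iic_inter_Ioi]
    exact (intervalIntegrable_iff_integrableOn_Ioc_of_le hL).mp hg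
  have hGpiece : ∀ j : ℕ, IntervalIntegrable G volume (j * γ) ((j + 1 : ℕ) * γ) := fun j =>
    (intervalIntegrable_iff_integrableOn_Ioc_of_le (by gcongr; omega)).mpr
      (hGint.mono_set fun t ht => lt_of_le_of_lt (by positivity) ht.1)
  have hextend : ∫ t in (0)..L, g t = ∫ t in (0)..(M * γ), G t := by
    rw [intervalIntegral.integral_of_le hL, intervalIntegral.integral_of_le (by positivity),
      setIntegral_indicator measurableSet_Iic, Set.Ioc_inter_Iic,
      min_eq_right ((div_le_iff₀ hγ).mp (Nat.le_ceil _))]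
  have hshift : ∀ j : ℕ,
      ∫ t in (j * γ)..((j + 1 : ℕ) * γ), G t = ∫ u in (0)..γ, G (u + j * γ) := by
    intro j
    rw [intervalIntegral.integral_comp_add_right, zero_add]
    push_cast
    ring_nf
  have hpointwise : ∀ u ∈ Set.Icc 0 γ, ∑ j ∈ range M, G (u + j * γ) ≤ D := by
    intro u hu
    simp only [G, Set.indicator_apply, Set.mem_Iic, ← sum_filter]
    exact hD u hu _ fun j hj => (mem_filter.mp hj).2
  have htranslate : ∀ j : ℕ, IntervalIntegrable (fun u => G (u + j * γ)) volume 0 γ := by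
    intro j
    have h := (hGpiece j).comp_add_right (j * γ)
    rwa [sub_self, Nat.cast_succ, add_one_mul, add_sub_cancel_left] at h
  calc ∫ t in (0)..L, g t = ∑ j ∈ range M, ∫ u in (0)..γ, G (u + j * γ) := by
        rw [hextend, ← Finset.sum_congr rfl fun j _ => hshift j,
          intervalIntegral.sum_integral_adjacent_intervals fun k _ => hGpiece k]
        simp
    _ = ∫ u in (0)..γ, ∑ j ∈ range M, G (u + j * γ) :=
        (intervalIntegral.integral_finsetSum fun j _ => htranslate j).symm
    _ ≤ ∫ _ in (0)..γ, D :=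
        intervalIntegral.integral_mono_on hγ.le
          (by simpa only [← sum_fn] using IntervalIntegrable.sum _ fun j _ => htranslate j)
          intervalIntegrable_const hpointwise
    _ = γ * D := by simp

lemma card_mul_le_one_of_forall_add_mul_le {u γ : ℝ} (hu : 0 ≤ u) (hγ : 0 < γ) {J : Finset ℕ}
    (hJ : ∀ j ∈ J, u + j * γ ≤ 1 - γ) : (#J : ℝ) * γ ≤ 1 := by
  rcases J.eq_empty_or_nonempty with rfl | hne
  · simp
  have hcard : #J ≤ J.max' hne + 1 :=
    (card_le_card fun j hj => mem_range.mpr (Nat.lt_succ_of_le (J.le_max' j hj))).trans_eq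
      (card_range _)
  have hmax := hJ _ (J.max'_mem hne)
  calc (#J : ℝ) * γ ≤ ((J.max' hne : ℝ) + 1) * γ := by gcongr; exact_mod_cast hcard
    _ ≤ 1 := by linarith

lemma div_rpow_sum_le_of_mul_le_one {w : ℕ → ℝ} (hw : ∀ i, 0 < w i) {r : ℝ} (hr : 0 ≤ r)
    {n k : ℕ} (hn : 1 ≤ n) (hk : 1 ≤ k) {γ : ℝ} (hγ : 0 < γ) (hnγ : n * γ ≤ 1)
    (hkγ : k * γ ≤ 1) {C : ℝ}
    (hC : ∀ k, 1 ≤ k → k ≤ n → (k : ℝ) / (∑ i ∈ range k, w i) ^ r ≤ C) :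
    (k : ℝ) / (∑ i ∈ range k, w i) ^ r ≤ C / (n * γ) := by
  have hW : ∀ k, 1 ≤ k → 0 < ∑ i ∈ range k, w i := fun k hk =>
    sum_pos (fun i _ => hw i) (nonempty_range_iff.mpr (by omega))
  have hnγ0 : 0 < n * γ := mul_pos (by exact_mod_cast hn) hγ
  rcases le_or_gt k n with hkn | hnk
  · have hC0 : 0 ≤ C := (div_nonneg (Nat.cast_nonneg k) (Real.rpow_nonneg (hW k hk).le r)).trans
      (hC k hk hkn)
    exact (hC k hk hkn).trans (le_div_self hC0 hnγ0 hnγ)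
  · have hWnk : ∑ i ∈ range n, w i ≤ ∑ i ∈ range k, w i :=
      sum_le_sum_of_subset_of_nonneg (range_subset_range.mpr hnk.le) fun i _ _ => (hw i).le
    have hWn : 0 < (∑ i ∈ range n, w i) ^ r := Real.rpow_pos_of_pos (hW n hn) r
    calc (k : ℝ) / (∑ i ∈ range k, w i) ^ r ≤ k / (∑ i ∈ range n, w i) ^ r :=
          div_le_div_of_nonneg_left (Nat.cast_nonneg k) hWn
            (Real.rpow_le_rpow (hW n hn).le hWnk hr)
      _ ≤ γ⁻¹ / (∑ i ∈ range n, w i) ^ r := by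
          gcongr
          rwa [← one_div, le_div_iff₀ hγ]
      _ = (n / (∑ i ∈ range n, w i) ^ r) / (n * γ) := by
          field_simp
      _ ≤ C / (n * γ) := by gcongr; exact hC n hn le_rfl

lemma div_rpow_sum_le_sSup {w : ℕ → ℝ} {r : ℝ} {n k : ℕ} (hk : 1 ≤ k) (hkn : k ≤ n) :
    (k : ℝ) / (∑ i ∈ range k, w i) ^ r ≤
      sSup {v : ℝ | ∃ k : ℕ, 1 ≤ k ∧ k ≤ n ∧ v = (k : ℝ) / (∑ i ∈ range k, w i) ^ r} :=
  le_csSup (((Set.finite_Icc 1 n).image fun k : ℕ => (k : ℝ) / (∑ i ∈ range k, w i) ^ r)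
    |>.bddAbove.mono (by rintro _ ⟨k, hk, hkn, rfl⟩; exact ⟨k, ⟨hk, hkn⟩, rfl⟩)) ⟨k, hk, hkn, rfl⟩

section Translates

variable {p q : ℝ} {Λ : ℕ → ℝ} {f : ℝ → ℝ}

theorem sum_abs_sub_rpow_translates_le (hp : 0 < p) (hq : 0 < q) (hΛ : ∀ i, 0 < Λ i)
    (hΛm : Monotone Λ) (hf : MemWS p Λ f) {u γ : ℝ} (hu : 0 ≤ u) (hγ : 0 < γ) {J : Finset ℕ}
    (hJ : ∀ j ∈ J, u + j * γ ≤ 1 - γ) {C : ℝ} (hC0 : 0 ≤ C)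
    (hC : ∀ k : ℕ, 1 ≤ k → k * γ ≤ 1 → (k : ℝ) / (∑ i ∈ range k, 1 / Λ i) ^ (q / p) ≤ C) :
    ∑ j ∈ J, |f (u + j * γ + γ) - f (u + j * γ)| ^ q ≤ pVar p Λ f ^ q * C := by
  have hfamily :
      IsNonoverlappingInUnitInterval (fun j : J => u + j * γ) (fun j : J => u + j * γ + γ) := by
    refine ⟨fun j => ⟨by positivity, by linarith, by linarith [hJ j j.2]⟩, fun i j hij => ?_⟩
    rcases lt_or_gt_of_ne (Subtype.coe_ne_coe.mpr hij) with hlt | hlt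
    · left
      have : (i : ℝ) + 1 ≤ j := by exact_mod_cast hlt
      nlinarith
    · right
      have : (j : ℝ) + 1 ≤ i := by exact_mod_cast hlt
      nlinarith
  rw [← sum_coe_sort J]
  refine sum_abs_rpow_le_pVar_rpow_mul hfamily hp hq hΛ hΛm hf hC0 fun k hk hkJ => hC k hk ?_
  calc (k : ℝ) * γ ≤ #J * γ := by
        gcongr
        exact_mod_cast hkJ.trans (Fintype.card_coe J).le
    _ ≤ 1 := card_mul_le_one_of_forall_add_mul_le hu hγ hJ

end Translates

lemma omegaq_rpow_le {q δ B : ℝ} (f : ℝ → ℝ) (hq : 0 < q) (hδ0 : 0 ≤ δ) (hδ1 : δ ≤ 1)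
    (hB : ∀ γ, 0 ≤ γ → γ ≤ δ → ∫ t in (0)..(1 - γ), |f (t + γ) - f t| ^ q ≤ B) :
    omegaq q f δ ^ q ≤ B := by
  have hint : ∀ γ ≤ 1, 0 ≤ ∫ t in (0)..(1 - γ), |f (t + γ) - f t| ^ q := fun γ hγ =>
    intervalIntegral.integral_nonneg (by linarith) fun t _ => Real.rpow_nonneg (abs_nonneg _) q
  have hB0 : 0 ≤ B := (hint 0 zero_le_one).trans (hB 0 le_rfl hδ0)
  have hω : omegaq q f δ ≤ B ^ (1 / q) := by
    refine Real.sSup_le ?_ (Real.rpow_nonneg hB0 _)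
    rintro _ ⟨γ, hγ0, hγδ, rfl⟩
    exact Real.rpow_le_rpow (hint γ (hγδ.trans hδ1)) (hB γ hγ0 hγδ) (by positivity)
  have hω0 : 0 ≤ omegaq q f δ := by
    refine Real.sSup_nonneg ?_
    rintro _ ⟨γ, -, hγδ, rfl⟩
    exact Real.rpow_nonneg (hint γ (hγδ.trans hδ1)) _
  calc omegaq q f δ ^ q ≤ (B ^ (1 / q)) ^ q := Real.rpow_le_rpow hω0 hω hq.le
    _ = B := by rw [← Real.rpow_mul hB0, one_div_mul_cancel hq.ne', Real.rpow_one]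

theorem stmt4_general (p q : ℝ) (hp : 1 ≤ p) (hq : 1 ≤ q)
    (Λ : ℕ → ℝ) (hΛpos : ∀ i, 0 < Λ i) (hΛmono : Monotone Λ)
    (f : ℝ → ℝ) (hf : MemWS p Λ f) (n : ℕ) (hn : 1 ≤ n) :
    omegaq q f (1 / n) ^ q ≤
      (pVar p Λ f) ^ q * (1 / n) *
        sSup {v : ℝ | ∃ k : ℕ, 1 ≤ k ∧ k ≤ n ∧
          v = (k : ℝ) / (∑ i ∈ Finset.range k, 1 / Λ i) ^ (q / p)} := by
  have hp0 : 0 < p := by linarith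
  have hq0 : 0 < q := by linarith
  have hn0 : (0 : ℝ) < n := by exact_mod_cast hn
  set C := sSup {v : ℝ | ∃ k : ℕ, 1 ≤ k ∧ k ≤ n ∧
    v = (k : ℝ) / (∑ i ∈ Finset.range k, 1 / Λ i) ^ (q / p)}
  have hC0 : 0 ≤ C := (div_nonneg (Nat.cast_nonneg 1) (Real.rpow_nonneg (sum_nonneg fun i _ =>
    (one_div_pos.mpr (hΛpos i)).le) _)).trans (div_rpow_sum_le_sSup le_rfl hn)
  have hV := pVar_nonneg hp0.ne' hf
  have hn1 : 1 / (n : ℝ) ≤ 1 := (div_le_one hn0).mpr (by exact_mod_cast hn)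
  refine omegaq_rpow_le f hq0 (by positivity) hn1 fun γ hγ0 hγn => ?_
  rcases hγ0.eq_or_lt with rfl | hγ
  · simp [Real.zero_rpow hq0.ne']
    positivity
  have hnγ : n * γ ≤ 1 := by rwa [le_div_iff₀ hn0, mul_comm] at hγn
  calc ∫ t in (0)..(1 - γ), |f (t + γ) - f t| ^ q ≤ γ * (pVar p Λ f ^ q * (C / (n * γ))) :=
        intervalIntegral_le_of_sum_translates_le (by linarith [hγn.trans hn1]) hγ fun u hu J hJ =>
          sum_abs_sub_rpow_translates_le hp0 hq0 hΛpos hΛmono hf hu.1 hγ hJ (by positivity)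
            fun k hk hkγ => div_rpow_sum_le_of_mul_le_one (fun i => one_div_pos.mpr (hΛpos i))
              (by positivity) hn hk hγ hnγ hkγ fun k => div_rpow_sum_le_sSup
    _ = pVar p Λ f ^ q * (1 / n) * C := by field_simp

/-- For `p, q ≥ 1`, `Λ` nondecreasing positive with `∑ 1/λᵢ = ∞`, and
`f ∈ ΛBV^{(p)}` on `[0,1]`, for every `n ≥ 1`:
`ω_q(1/n, f)^q ≤ V(f)^q · (1/n) · max_{1 ≤ k ≤ n} k/(∑_{i=1}^k 1/λᵢ)^{q/p}`. -/
theorem stmt4 (p q : ℝ) (hp : 1 ≤ p) (hq : 1 ≤ q)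
    (Λ : ℕ → ℝ) (hΛpos : ∀ i, 0 < Λ i) (hΛmono : Monotone Λ)
    (hΛdiv : Filter.Tendsto (fun n => ∑ i ∈ Finset.range n, 1 / Λ i) Filter.atTop Filter.atTop)
    (f : ℝ → ℝ) (hf : MemWS p Λ f) (n : ℕ) (hn : 1 ≤ n) :
    omegaq q f (1 / n) ^ q ≤
      (pVar p Λ f) ^ q * (1 / n) *
        sSup {v : ℝ | ∃ k : ℕ, 1 ≤ k ∧ k ≤ n ∧
          v = (k : ℝ) / (∑ i ∈ Finset.range k, 1 / Λ i) ^ (q / p)} :=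
  stmt4_general p q hp hq Λ hΛpos hΛmono f hf n hn
end

section
/- Let p, q ∈ [1, ∞), Λ = (λ_i) nondecreasing positive with Σ 1/λ_i = ∞, and ω a modulus of continuity. If limsup_{n→∞} [1/(ω(1/n) n^{1/q})] · max_{1 ≤ k ≤ n} k^{1/q}/(Σ_{i=1}^k 1/λ_i)^{1/p} = +∞, then there exists a function g of bounded p-Λ-variation on [0,1] with g ∉ H_ω^q. -/
open MeasureTheory

/-! Choose `n_j` along which the quantity in `hunbdd` exceeds `j` up to an explicit factor, and
`k_j ≤ n_j` attaining the maximum over `k`. In the dyadic block `[1 - 2^{-j}, 1 - 2^{-j-1})` place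
`k_j` spikes of width `w_j ≍ 2^{-j}/n_j` and height `h_j = 2^{-j} (∑_{i<k_j} 1/λ_i)^{-1/p}`, each
followed by a gap of the same width. An interval on which `g` changes contains an endpoint of a
spike, and nonoverlapping intervals contain distinct endpoints; block `j` has `2k_j` endpoints and
`λ` is nondecreasing, so the `Λ`-variation sum is at most
`∑_j h_j^p ∑_{i<2k_j} 1/λ_i ≤ ∑_j 2^{1-j}`.
Shifting by `w_j` moves every spike of block `j` onto a gap, so `ω_q(w_j, g) ≥ h_j (k_j w_j)^{1/q}`,
which by the choice of `n_j` exceeds `j ω(w_j)`. -/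

open Set Filter Topology Function

noncomputable def harmonicSum (Λ : ℕ → ℝ) (m : ℕ) : ℝ := ∑ i ∈ Finset.range m, 1 / Λ i

theorem Antitone.sum_le_sum_range_card {f : ℕ → ℝ} (hf : Antitone f) (s : Finset ℕ) :
    ∑ i ∈ s, f i ≤ ∑ i ∈ Finset.range s.card, f i := by
  classical
  induction s using Finset.induction_on_max with
  | empty => simp
  | insert a s ha ih =>
    have has : a ∉ s := fun h => lt_irrefl a (ha a h)
    have hcard : s.card ≤ a := by
      simpa using Finset.card_le_card fun x hx => Finset.mem_range.2 (ha x (Finset.mem_coe.1 hx))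
    rw [Finset.sum_insert has, Finset.card_insert_of_notMem has, Finset.sum_range_succ]
    linarith [hf hcard]

section HarmonicSum

variable {Λ : ℕ → ℝ}

theorem harmonicSum_pos (hΛ : ∀ i, 0 < Λ i) {m : ℕ} (hm : 1 ≤ m) : 0 < harmonicSum Λ m :=
  Finset.sum_pos (fun i _ => one_div_pos.2 (hΛ i)) (Finset.nonempty_range_iff.2 (by omega))

theorem harmonicSum_mono (hΛ : ∀ i, 0 < Λ i) : Monotone (harmonicSum Λ) := fun _ _ hmn =>
  Finset.sum_le_sum_of_subset_of_nonneg (Finset.range_subset_range.2 hmn)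
    fun i _ _ => (one_div_pos.2 (hΛ i)).le

theorem harmonicSum_two_mul_le (hΛ : ∀ i, 0 < Λ i) (hmono : Monotone Λ) (m : ℕ) :
    harmonicSum Λ (2 * m) ≤ 2 * harmonicSum Λ m := by
  simp only [harmonicSum, two_mul, Finset.sum_range_add]
  gcongr with i
  · exact hΛ i
  · exact hmono (Nat.le_add_left i m)

theorem sum_one_div_le_harmonicSum (hΛ : ∀ i, 0 < Λ i) (hmono : Monotone Λ) (s : Finset ℕ) :
    ∑ i ∈ s, 1 / Λ i ≤ harmonicSum Λ s.card :=
  Antitone.sum_le_sum_range_card (fun _ _ hij => one_div_le_one_div_of_le (hΛ _) (hmono hij)) s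

/-- Since `Λ` is nondecreasing, a class `J i = j` of at most `N j` indices weighs at most what
the first `N j` indices weigh. -/
theorem sum_div_le_sum_mul_harmonicSum (hΛ : ∀ i, 0 < Λ i) (hmono : Monotone Λ) {n : ℕ}
    (D : Finset (Fin n)) (c : Fin n → ℝ) (J : Fin n → ℕ) (H : ℕ → ℝ) (N : ℕ → ℕ)
    (hcH : ∀ i ∈ D, c i ≤ H (J i)) (hH : ∀ j, 0 ≤ H j)
    (hN : ∀ j, (D.filter (J · = j)).card ≤ N j) :
    ∑ i ∈ D, c i / Λ i ≤ ∑ j ∈ D.image J, H j * harmonicSum Λ (N j) := by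
  classical
  rw [← Finset.sum_fiberwise_of_maps_to fun i hi => Finset.mem_image_of_mem J hi]
  gcongr with j
  set F := D.filter (J · = j)
  calc ∑ i ∈ F, c i / Λ i ≤ ∑ i ∈ F, H j * (1 / Λ i) := by
        refine Finset.sum_le_sum fun i hi => ?_
        obtain ⟨hiD, rfl⟩ := Finset.mem_filter.1 hi
        rw [mul_one_div]
        exact div_le_div_of_nonneg_right (hcH i hiD) (hΛ i).le
    _ = H j * ∑ i ∈ F.map Fin.valEmbedding, 1 / Λ i := by
        rw [Finset.sum_map, Finset.mul_sum]; rfl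
    _ ≤ H j * harmonicSum Λ (N j) := by
        gcongr
        · exact hH j
        · calc _ ≤ harmonicSum Λ (F.map Fin.valEmbedding).card :=
                sum_one_div_le_harmonicSum hΛ hmono _
            _ ≤ harmonicSum Λ (N j) := harmonicSum_mono hΛ (by simpa using hN j)

end HarmonicSum

theorem injOn_of_mem_Ioc {ι : Type*} {a b β : ι → ℝ} {s : Set ι}
    (hab : ∀ i j, i ≠ j → b i ≤ a j ∨ b j ≤ a i) (hβ : ∀ i ∈ s, β i ∈ Ioc (a i) (b i)) :
    InjOn β s := by
  intro i hi j hj hij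
  by_contra hne
  have hi' := hβ i hi
  have hj' := hβ j hj
  rcases hab i j hne with h | h
  · linarith [hi'.2, hj'.1]
  · linarith [hi'.1, hj'.2]

theorem abs_sub_rpow_le {q : ℝ} (hq : 0 ≤ q) {a b B : ℝ} (ha : |a| ≤ B) (hb : |b| ≤ B) :
    |a - b| ^ q ≤ (2 * B) ^ q :=
  Real.rpow_le_rpow (abs_nonneg _) (by linarith [abs_sub a b]) hq

/-- The bound on `|g|` makes the set defining `omegaq` bounded above, so its supremum is not the
junk value `sSup` takes on unbounded sets. -/
theorem le_omegaq {q : ℝ} (hq : 0 < q) {g : ℝ → ℝ} {B : ℝ} (hB : ∀ x, |g x| ≤ B) {γ δ : ℝ}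
    (hγ : 0 ≤ γ) (hγδ : γ ≤ δ) (hδ : δ ≤ 1) :
    (∫ t in (0:ℝ)..(1 - γ), |g (t + γ) - g t| ^ q) ^ (1 / q) ≤ omegaq q g δ := by
  refine le_csSup ⟨((2 * B) ^ q) ^ (1 / q), ?_⟩ ⟨γ, hγ, hγδ, rfl⟩
  rintro _ ⟨γ', hγ', hγ'δ, rfl⟩
  have h1 : 0 ≤ 1 - γ' := by linarith
  have hF : ∀ t, ‖|g (t + γ') - g t| ^ q‖ ≤ (2 * B) ^ q := fun t => by
    rw [Real.norm_of_nonneg (by positivity)]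
    exact abs_sub_rpow_le hq.le (hB _) (hB _)
  have hB0 : 0 ≤ (2 * B) ^ q := (norm_nonneg _).trans (hF 0)
  gcongr
  · exact intervalIntegral.integral_nonneg h1 fun t _ => by positivity
  · calc _ ≤ ‖∫ t in (0:ℝ)..(1 - γ'), |g (t + γ') - g t| ^ q‖ := Real.le_norm_self _
      _ ≤ (2 * B) ^ q * |1 - γ' - 0| :=
          intervalIntegral.norm_integral_le_of_norm_le_const fun t _ => hF t
      _ ≤ (2 * B) ^ q := by
          rw [sub_zero, abs_of_nonneg h1]
          nlinarith

theorem mul_volume_le_intervalIntegral {F : ℝ → ℝ} {a b c : ℝ} {U : Set ℝ} (hab : a ≤ b)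
    (hF : IntegrableOn F (Ioc a b)) (hF0 : ∀ t ∈ Ioc a b, 0 ≤ F t) (hU : MeasurableSet U)
    (hUab : U ⊆ Ioc a b) (hc : ∀ t ∈ U, c ≤ F t) :
    c * volume.real U ≤ ∫ t in a..b, F t := by
  rw [intervalIntegral.integral_of_le hab]
  calc c * volume.real U ≤ ∫ t in U, F t :=
        setIntegral_ge_of_const_le_real hU (measure_ne_top_of_subset hUab measure_Ioc_lt_top.ne) hc
          (hF.mono_set hUab)
    _ ≤ ∫ t in Ioc a b, F t :=
        setIntegral_mono_set hF (ae_restrict_of_forall_mem measurableSet_Ioc hF0)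
          (Eventually.of_forall hUab)

theorem not_memH_of_tendsto {q : ℝ} {ω g : ℝ → ℝ} {δ : ℕ → ℝ} (hδ : Tendsto δ atTop (𝓝[>] 0))
    (hω : ∀ᶠ j in atTop, 0 < ω (δ j))
    (hlow : ∀ᶠ j : ℕ in atTop, (j : ℝ) * ω (δ j) ≤ omegaq q g (δ j)) : ¬ MemH q ω g := by
  rintro ⟨-, C, δ₀, hδ₀, hC⟩
  obtain ⟨j, ⟨hδpos, hδle⟩, hωj, hj, hCj⟩ := ((hδ.eventually (Ioo_mem_nhdsGT hδ₀)).and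
    (hω.and (hlow.and (eventually_gt_atTop ⌈C⌉₊)))).exists
  have hCj' : C < j := (Nat.le_ceil C).trans_lt (by exact_mod_cast hCj)
  nlinarith [hC (δ j) hδpos hδle.le]

def dyadicBlock (j : ℕ) : Set ℝ := Ico (1 - (2:ℝ)⁻¹ ^ j) (1 - (2:ℝ)⁻¹ ^ (j + 1))

theorem pairwise_disjoint_dyadicBlock : Pairwise (Disjoint on dyadicBlock) := by
  have hmono : Monotone fun j : ℕ => 1 - (2:ℝ)⁻¹ ^ j := fun _ _ hij =>
    sub_le_sub_left (pow_le_pow_of_le_one (by norm_num) (by norm_num) hij) 1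
  exact hmono.pairwise_disjoint_on_Ico_succ

/-- Block `j` carries `k j` spikes of width `w j`, the `m`-th starting at `spikeStart w j m`,
each followed by a gap of the same width. -/
noncomputable def spikeStart (w : ℕ → ℝ) (j m : ℕ) : ℝ := 1 - (2:ℝ)⁻¹ ^ j + 2 * m * w j

def spikeCell (w : ℕ → ℝ) (j m : ℕ) : Set ℝ := Ico (spikeStart w j m) (spikeStart w j (m + 1))

def spikes (w : ℕ → ℝ) (k : ℕ → ℕ) (j : ℕ) : Set ℝ :=
  ⋃ m ∈ Finset.range (k j), Ico (spikeStart w j m) (spikeStart w j m + w j)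

noncomputable def spikeEnds (w : ℕ → ℝ) (k : ℕ → ℕ) (j : ℕ) : Finset ℝ :=
  (Finset.range (k j)).image (spikeStart w j) ∪
    (Finset.range (k j)).image fun m => spikeStart w j m + w j

noncomputable def spikeFun (w h : ℕ → ℝ) (k : ℕ → ℕ) (x : ℝ) : ℝ :=
  ∑' j, (spikes w k j).indicator (fun _ => h j) x

def SpikesFit (w : ℕ → ℝ) (k : ℕ → ℕ) : Prop :=
  ∀ j, 0 < w j ∧ 2 * k j * w j ≤ (2:ℝ)⁻¹ ^ (j + 1)

section Spikes

variable {w h : ℕ → ℝ} {k : ℕ → ℕ}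

theorem spikeStart_succ (j m : ℕ) : spikeStart w j (m + 1) = spikeStart w j m + 2 * w j := by
  simp only [spikeStart]
  push_cast
  ring

theorem spike_subset_spikeCell (hf : SpikesFit w k) (j m : ℕ) :
    Ico (spikeStart w j m) (spikeStart w j m + w j) ⊆ spikeCell w j m :=
  Ico_subset_Ico_right (by rw [spikeStart_succ]; linarith [(hf j).1])

theorem mem_spikes {j : ℕ} {x : ℝ} :
    x ∈ spikes w k j ↔ ∃ m < k j, x ∈ Ico (spikeStart w j m) (spikeStart w j m + w j) := by
  simp only [spikes, mem_iUnion, Finset.mem_range, exists_prop]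

theorem measurableSet_spikes (j : ℕ) : MeasurableSet (spikes w k j) :=
  (Finset.range (k j)).measurableSet_biUnion fun _ _ => measurableSet_Ico

theorem card_spikeEnds_le (j : ℕ) : (spikeEnds w k j).card ≤ 2 * k j :=
  (Finset.card_union_le _ _).trans <| by
    linarith [Finset.card_image_le (s := Finset.range (k j)) (f := spikeStart w j),
      Finset.card_image_le (s := Finset.range (k j)) (f := fun m => spikeStart w j m + w j),
      Finset.card_range (k j)]

theorem pairwise_disjoint_spikeCell (hf : SpikesFit w k) (j : ℕ) :
    Pairwise (Disjoint on spikeCell w j) := by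
  have hmono : Monotone (spikeStart w j) := fun _ _ hmn => by
    unfold spikeStart
    have := (hf j).1
    gcongr
  exact hmono.pairwise_disjoint_on_Ico_succ

theorem spikeCell_subset_dyadicBlock (hf : SpikesFit w k) {j m : ℕ} (hm : m < k j) :
    spikeCell w j m ⊆ dyadicBlock j := by
  obtain ⟨hw, hfit⟩ := hf j
  have hm' : (m : ℝ) + 1 ≤ k j := by exact_mod_cast hm
  have hpow : (2:ℝ)⁻¹ ^ j = 2 * (2:ℝ)⁻¹ ^ (j + 1) := by ring
  apply Ico_subset_Ico <;> simp only [spikeStart] <;> push_cast <;> nlinarith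

theorem spikes_subset_dyadicBlock (hf : SpikesFit w k) (j : ℕ) : spikes w k j ⊆ dyadicBlock j := by
  intro x hx
  obtain ⟨m, hm, hx⟩ := mem_spikes.1 hx
  exact spikeCell_subset_dyadicBlock hf hm (spike_subset_spikeCell hf j m hx)

theorem pairwise_disjoint_spikes (hf : SpikesFit w k) : Pairwise (Disjoint on spikes w k) :=
  fun _ _ hij => (pairwise_disjoint_dyadicBlock hij).mono
    (spikes_subset_dyadicBlock hf _) (spikes_subset_dyadicBlock hf _)

theorem hasSum_spikeFun (hf : SpikesFit w k) (x : ℝ) :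
    HasSum (fun j => (spikes w k j).indicator (fun _ => h j) x) (spikeFun w h k x) := by
  refine (summable_of_hasFiniteSupport <| show Set.Finite _ from
    Set.Subsingleton.finite fun i hi j hj => ?_).hasSum
  by_contra hij
  exact (pairwise_disjoint_spikes hf hij).notMem_of_mem_left
    (mem_of_indicator_ne_zero hi) (mem_of_indicator_ne_zero hj)

theorem spikeFun_of_mem (hf : SpikesFit w k) {j : ℕ} {x : ℝ} (hx : x ∈ spikes w k j) :
    spikeFun w h k x = h j := by
  rw [spikeFun, tsum_eq_single j fun i hij => indicator_of_notMem
    ((pairwise_disjoint_spikes hf hij).notMem_of_mem_right hx) _, indicator_of_mem hx]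

theorem spikeFun_of_notMem {x : ℝ} (hx : ∀ j, x ∉ spikes w k j) : spikeFun w h k x = 0 := by
  simp [spikeFun, indicator_of_notMem (hx _)]

theorem spikeFun_eq_zero_or (hf : SpikesFit w k) (x : ℝ) :
    spikeFun w h k x = 0 ∨ ∃ j, x ∈ spikes w k j ∧ spikeFun w h k x = h j := by
  by_cases hx : ∃ j, x ∈ spikes w k j
  · obtain ⟨j, hj⟩ := hx
    exact Or.inr ⟨j, hj, spikeFun_of_mem hf hj⟩
  · exact Or.inl (spikeFun_of_notMem (not_exists.1 hx))

theorem spikeFun_nonneg (hf : SpikesFit w k) (hh : ∀ j, 0 ≤ h j) (x : ℝ) :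
    0 ≤ spikeFun w h k x := by
  rcases spikeFun_eq_zero_or hf x with hx | ⟨j, -, hx⟩ <;> rw [hx]
  exact hh j

theorem abs_spikeFun_le (hf : SpikesFit w k) (hh : ∀ j, 0 ≤ h j) {B : ℝ} (hB : ∀ j, h j ≤ B)
    (x : ℝ) : |spikeFun w h k x| ≤ B := by
  rw [abs_of_nonneg (spikeFun_nonneg hf hh x)]
  rcases spikeFun_eq_zero_or hf x with hx | ⟨j, -, hx⟩
  · linarith [hh 0, hB 0]
  · exact hx ▸ hB j

theorem measurable_spikeFun (hf : SpikesFit w k) : Measurable (spikeFun w h k) :=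
  measurable_of_tendsto_metrizable
    (fun _ => Finset.measurable_sum _ fun j _ =>
      measurable_const.indicator (measurableSet_spikes j))
    (tendsto_pi_nhds.2 fun x => (hasSum_spikeFun hf x).tendsto_sum_nat)

theorem spikeFun_eq_zero_of_mem_gap (hf : SpikesFit w k) {j m : ℕ} (hm : m < k j) {x : ℝ}
    (hx : x ∈ Ico (spikeStart w j m + w j) (spikeStart w j (m + 1))) : spikeFun w h k x = 0 := by
  have hcell : x ∈ spikeCell w j m :=
    ⟨by linarith [hx.1, (hf j).1], hx.2⟩
  refine spikeFun_of_notMem fun j' hx' => ?_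
  obtain ⟨m', hm', hx'⟩ := mem_spikes.1 hx'
  have hcell' := spike_subset_spikeCell hf j' m' hx'
  obtain rfl : j' = j := by
    by_contra hne
    exact (pairwise_disjoint_dyadicBlock hne).notMem_of_mem_left
      (spikeCell_subset_dyadicBlock hf hm' hcell') (spikeCell_subset_dyadicBlock hf hm hcell)
  obtain rfl : m' = m := by
    by_contra hne
    exact (pairwise_disjoint_spikeCell hf j' hne).notMem_of_mem_left hcell' hcell
  linarith [hx.1, hx'.2]

/-- Where `spikeFun` changes between `u ≤ v`, the change is entered through the left end of a spike
containing `v` or left through the right end of a spike containing `u`. -/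
theorem exists_spikeEnds_mem_Ioc (hf : SpikesFit w k) (hh : ∀ j, 0 ≤ h j) {u v : ℝ} (huv : u ≤ v)
    (hne : spikeFun w h k u ≠ spikeFun w h k v) :
    ∃ j, |spikeFun w h k v - spikeFun w h k u| ≤ h j ∧ ∃ β ∈ spikeEnds w k j, β ∈ Ioc u v := by
  have hg := spikeFun_nonneg (h := h) hf hh
  rcases hne.lt_or_gt with hlt | hgt
  · obtain ⟨j, hv, hgv⟩ :=
      (spikeFun_eq_zero_or hf v).resolve_left ((hg u).trans_lt hlt).ne'
    obtain ⟨m, hm, hvm⟩ := mem_spikes.1 hv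
    have hu : u < spikeStart w j m := by
      by_contra! hu
      have := spikeFun_of_mem (h := h) hf (mem_spikes.2 ⟨m, hm, hu, huv.trans_lt hvm.2⟩)
      linarith
    refine ⟨j, ?_, spikeStart w j m, ?_, hu, hvm.1⟩
    · rw [abs_of_pos (sub_pos.2 hlt)]
      linarith [hg u]
    · exact Finset.mem_union_left _ (Finset.mem_image_of_mem _ (Finset.mem_range.2 hm))
  · obtain ⟨j, hu, hgu⟩ :=
      (spikeFun_eq_zero_or hf u).resolve_left ((hg v).trans_lt hgt).ne'
    obtain ⟨m, hm, hum⟩ := mem_spikes.1 hu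
    have hv : spikeStart w j m + w j ≤ v := by
      by_contra! hv
      have := spikeFun_of_mem (h := h) hf (mem_spikes.2 ⟨m, hm, hum.1.trans huv, hv⟩)
      linarith
    refine ⟨j, ?_, spikeStart w j m + w j, ?_, hum.2, hv⟩
    · rw [abs_of_neg (sub_neg.2 hgt)]
      linarith [hg v]
    · exact Finset.mem_union_right _
        (Finset.mem_image_of_mem (fun m => spikeStart w j m + w j) (Finset.mem_range.2 hm))

/-- Each interval of a nonoverlapping family on which `spikeFun` changes is charged to a distinct
spike end; block `j` has `2 k j` of them, hence the class of such intervals has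
`Λ`-weight at most `harmonicSum Λ (2 * k j)`. -/
theorem memWS_spikeFun {p : ℝ} (hp : 0 < p) {Λ : ℕ → ℝ} (hΛ : ∀ i, 0 < Λ i) (hmono : Monotone Λ)
    (hf : SpikesFit w k) (hh : ∀ j, 0 ≤ h j)
    (hsum : Summable fun j => h j ^ p * harmonicSum Λ (2 * k j)) : MemWS p Λ (spikeFun w h k) := by
  classical
  refine ⟨(∑' j, h j ^ p * harmonicSum Λ (2 * k j)) ^ (1 / p), ?_⟩
  rintro _ ⟨n, a, b, hab, hdisj, rfl⟩
  set g := spikeFun w h k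
  set D := Finset.univ.filter fun i => g (a i) ≠ g (b i)
  have hD : ∀ i ∈ D, ∃ j, |g (b i) - g (a i)| ≤ h j ∧
      ∃ β ∈ spikeEnds w k j, β ∈ Ioc (a i) (b i) := fun i hi =>
    exists_spikeEnds_mem_Ioc hf hh (hab i).2.1 (Finset.mem_filter.1 hi).2
  choose! J hJ β hβ using hD
  have hβinj : InjOn β D := injOn_of_mem_Ioc hdisj fun i hi => (hβ i hi).2
  have hfiber : ∀ j, (D.filter (J · = j)).card ≤ 2 * k j := fun j =>
    (Finset.card_le_card_of_injOn β (fun i hi => by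
        obtain ⟨hiD, rfl⟩ := Finset.mem_filter.1 hi
        exact (hβ i hiD).1)
      (hβinj.mono (Finset.coe_subset.2 (Finset.filter_subset _ _)))).trans (card_spikeEnds_le j)
  have hterm : ∀ j, 0 ≤ h j ^ p * harmonicSum Λ (2 * k j) := fun j =>
    mul_nonneg (Real.rpow_nonneg (hh j) p) (Finset.sum_nonneg fun i _ => (one_div_pos.2 (hΛ i)).le)
  gcongr
  · exact Finset.sum_nonneg fun i _ => div_nonneg (by positivity) (hΛ i).le
  calc ∑ i, |g (b i) - g (a i)| ^ p / Λ i = ∑ i ∈ D, |g (b i) - g (a i)| ^ p / Λ i := by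
        refine (Finset.sum_filter_of_ne fun i _ hi => ?_).symm
        contrapose! hi
        rw [hi, sub_self, abs_zero, Real.zero_rpow hp.ne', zero_div]
    _ ≤ ∑ j ∈ D.image J, h j ^ p * harmonicSum Λ (2 * k j) :=
        sum_div_le_sum_mul_harmonicSum hΛ hmono D _ J _ _
          (fun i hi => Real.rpow_le_rpow (abs_nonneg _) (hJ i hi) hp.le)
          (fun j => Real.rpow_nonneg (hh j) p) hfiber
    _ ≤ ∑' j, h j ^ p * harmonicSum Λ (2 * k j) := hsum.sum_le_tsum _ fun j _ => hterm j

theorem volume_real_spikes (hf : SpikesFit w k) (j : ℕ) :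
    volume.real (spikes w k j) = k j * w j := by
  have hdisj : (↑(Finset.range (k j)) : Set ℕ).PairwiseDisjoint
      fun m => Ico (spikeStart w j m) (spikeStart w j m + w j) := fun m _ m' _ hmm' =>
    (pairwise_disjoint_spikeCell hf j hmm').mono (spike_subset_spikeCell hf j m)
      (spike_subset_spikeCell hf j m')
  rw [measureReal_def, spikes, measure_biUnion_finset hdisj fun _ _ => measurableSet_Ico]
  simp [Real.volume_Ico, (hf j).1.le]

theorem exists_add_mem_gap {j : ℕ} {t : ℝ} (ht : t ∈ spikes w k j) :
    ∃ m < k j, t + w j ∈ Ico (spikeStart w j m + w j) (spikeStart w j (m + 1)) := by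
  obtain ⟨m, hm, ht1, ht2⟩ := mem_spikes.1 ht
  exact ⟨m, hm, by linarith, by rw [spikeStart_succ]; linarith⟩

theorem spikes_subset_Ioc (hf : SpikesFit w k) {j : ℕ} (hj : 1 ≤ j) :
    spikes w k j ⊆ Ioc 0 (1 - w j) := by
  intro t ht
  obtain ⟨m, hm, hgap⟩ := exists_add_mem_gap ht
  have hblock := spikeCell_subset_dyadicBlock hf hm ⟨by linarith [hgap.1, (hf j).1], hgap.2⟩
  have htblock := spikes_subset_dyadicBlock hf j ht
  have hj2 : (2:ℝ)⁻¹ ^ j ≤ 2⁻¹ := by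
    simpa using pow_le_pow_of_le_one (a := (2:ℝ)⁻¹) (by norm_num) (by norm_num) hj
  have : (0:ℝ) < 2⁻¹ ^ (j + 1) := by positivity
  exact ⟨by linarith [htblock.1], by linarith [hblock.2]⟩

theorem mul_rpow_le_omegaq_spikeFun {q : ℝ} (hq : 0 < q) (hf : SpikesFit w k)
    (hh : ∀ j, 0 ≤ h j) {B : ℝ} (hB : ∀ j, h j ≤ B) {j : ℕ} (hj : 1 ≤ j) (hk : 1 ≤ k j) :
    h j * (k j * w j) ^ (1 / q) ≤ omegaq q (spikeFun w h k) (w j) := by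
  obtain ⟨hw, hkw⟩ := hf j
  have hk' : (1:ℝ) ≤ k j := by exact_mod_cast hk
  have hw1 : w j ≤ 1 := by
    nlinarith [pow_le_one₀ (n := j + 1) (by norm_num : (0:ℝ) ≤ 2⁻¹) (by norm_num)]
  have hgB := abs_spikeFun_le hf hh hB
  have hFint : IntegrableOn (fun t => |spikeFun w h k (t + w j) - spikeFun w h k t| ^ q)
      (Ioc 0 (1 - w j)) := by
    refine Measure.integrableOn_of_bounded measure_Ioc_lt_top.ne
      ((((measurable_spikeFun hf).comp (measurable_add_const _)).sub
        (measurable_spikeFun hf)).abs.pow_const q).aestronglyMeasurable (M := (2 * B) ^ q)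
      (Eventually.of_forall fun t => ?_)
    rw [Real.norm_of_nonneg (by positivity)]
    exact abs_sub_rpow_le hq.le (hgB _) (hgB _)
  have hlow : h j ^ q * (k j * w j) ≤
      ∫ t in (0:ℝ)..(1 - w j), |spikeFun w h k (t + w j) - spikeFun w h k t| ^ q := by
    rw [← volume_real_spikes hf]
    refine mul_volume_le_intervalIntegral (by linarith) hFint (fun t _ => by positivity)
      (measurableSet_spikes j) (spikes_subset_Ioc hf hj) fun t ht => ?_
    obtain ⟨m, hm, hgap⟩ := exists_add_mem_gap ht
    rw [spikeFun_eq_zero_of_mem_gap hf hm hgap, spikeFun_of_mem hf ht, zero_sub, abs_neg,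
      abs_of_nonneg (hh j)]
  calc h j * (k j * w j) ^ (1 / q) = (h j ^ q * (k j * w j)) ^ (1 / q) := by
        rw [Real.mul_rpow (Real.rpow_nonneg (hh j) q) (by positivity), ← Real.rpow_mul (hh j),
          mul_one_div_cancel hq.ne', Real.rpow_one]
    _ ≤ (∫ t in (0:ℝ)..(1 - w j),
          |spikeFun w h k (t + w j) - spikeFun w h k t| ^ q) ^ (1 / q) := by
        gcongr
        exact mul_nonneg (Real.rpow_nonneg (hh j) q) (by positivity)
    _ ≤ omegaq q (spikeFun w h k) (w j) := le_omegaq hq hgB hw.le le_rfl hw1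

end Spikes

theorem exists_one_le_lt_of_not_isBoundedUnder {u : ℕ → ℝ}
    (hu : ¬ IsBoundedUnder (· ≤ ·) atTop u) (C : ℝ) : ∃ n, 1 ≤ n ∧ C < u n := by
  by_contra! h
  exact hu ⟨C, eventually_map.2 (eventually_atTop.2 ⟨1, h⟩)⟩

theorem exists_eq_sSup_Icc (f : ℕ → ℝ) {n : ℕ} (hn : 1 ≤ n) :
    ∃ k, 1 ≤ k ∧ k ≤ n ∧ sSup {v : ℝ | ∃ k : ℕ, 1 ≤ k ∧ k ≤ n ∧ v = f k} = f k := by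
  have hS : {v : ℝ | ∃ k : ℕ, 1 ≤ k ∧ k ≤ n ∧ v = f k} = f '' Icc 1 n := by
    ext v
    simp [eq_comm, and_assoc]
  rw [hS]
  obtain ⟨k, ⟨hk1, hkn⟩, hk⟩ := ((nonempty_Icc.2 hn).image f).csSup_mem ((finite_Icc 1 n).image f)
  exact ⟨k, hk1, hkn, hk.symm⟩

theorem one_div_natCast_mem_Ioc {m : ℕ} (hm : 1 ≤ m) : 1 / (m : ℝ) ∈ Ioc 0 1 := by
  have : (1:ℝ) ≤ m := by exact_mod_cast hm
  exact ⟨by positivity, div_le_one_of_le₀ this (by positivity)⟩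

/-- The spikes of block `j` have width `2⁻¹ ^ (j + 2) / n j`, so that `k j ≤ n j` of them with their
gaps fit into the block, and height `2⁻¹ ^ j / (harmonicSum Λ (k j)) ^ (1 / p)`, so that the
`Λ`-weight of block `j` is `O(2⁻¹ ^ j)`. -/
noncomputable def spikeWidth (n : ℕ → ℕ) (j : ℕ) : ℝ := (2:ℝ)⁻¹ ^ (j + 2) / n j

noncomputable def spikeHeight (p : ℝ) (Λ : ℕ → ℝ) (k : ℕ → ℕ) (j : ℕ) : ℝ :=
  (2:ℝ)⁻¹ ^ j / harmonicSum Λ (k j) ^ (1 / p)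

section Parameters

variable {n k : ℕ → ℕ}

theorem spikesFit_spikeWidth (hk : ∀ j, 1 ≤ k j) (hkn : ∀ j, k j ≤ n j) :
    SpikesFit (spikeWidth n) k := fun j => by
  have hn : (0:ℝ) < n j := by exact_mod_cast (hk j).trans (hkn j)
  have hkn' : (k j : ℝ) / n j ≤ 1 := (div_le_one hn).2 (by exact_mod_cast hkn j)
  refine ⟨by unfold spikeWidth; positivity, ?_⟩
  calc 2 * k j * spikeWidth n j = 2 * (2:ℝ)⁻¹ ^ (j + 2) * (k j / n j) := by
        rw [spikeWidth]; ring
    _ ≤ 2 * (2:ℝ)⁻¹ ^ (j + 2) * 1 := by gcongr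
    _ = (2:ℝ)⁻¹ ^ (j + 1) := by ring

theorem spikeWidth_le_one_div (j : ℕ) : spikeWidth n j ≤ 1 / n j :=
  div_le_div_of_nonneg_right (pow_le_one₀ (by norm_num) (by norm_num)) (Nat.cast_nonneg _)

theorem tendsto_spikeWidth (hn : ∀ j, 1 ≤ n j) : Tendsto (spikeWidth n) atTop (𝓝[>] 0) := by
  have hpos : ∀ j, 0 < spikeWidth n j := fun j => by
    have : (0:ℝ) < n j := by exact_mod_cast hn j
    unfold spikeWidth
    positivity
  refine tendsto_nhdsWithin_iff.2 ⟨squeeze_zero (fun j => (hpos j).le)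
    (fun j => div_le_self (by positivity) (by exact_mod_cast hn j))
    ((tendsto_pow_atTop_nhds_zero_of_lt_one (by norm_num) (by norm_num)).comp
      (tendsto_add_atTop_nat 2)), Eventually.of_forall hpos⟩

variable {p : ℝ} {Λ : ℕ → ℝ}

theorem spikeHeight_nonneg (hΛ : ∀ i, 0 < Λ i) (hk : ∀ j, 1 ≤ k j) (j : ℕ) :
    0 ≤ spikeHeight p Λ k j := by
  have := harmonicSum_pos hΛ (hk j)
  unfold spikeHeight
  positivity

theorem spikeHeight_le (hp : 0 ≤ p) (hΛ : ∀ i, 0 < Λ i) (hk : ∀ j, 1 ≤ k j) (j : ℕ) :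
    spikeHeight p Λ k j ≤ 1 / harmonicSum Λ 1 ^ (1 / p) := by
  have h1 := harmonicSum_pos hΛ le_rfl
  refine div_le_div₀ zero_le_one (pow_le_one₀ (by norm_num) (by norm_num)) (by positivity) ?_
  exact Real.rpow_le_rpow h1.le (harmonicSum_mono hΛ (hk j)) (by positivity)

theorem summable_spikeHeight_rpow_mul (hp : 1 ≤ p) (hΛ : ∀ i, 0 < Λ i) (hmono : Monotone Λ)
    (hk : ∀ j, 1 ≤ k j) :
    Summable fun j => spikeHeight p Λ k j ^ p * harmonicSum Λ (2 * k j) := by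
  have hL2 : ∀ j, 0 < harmonicSum Λ (2 * k j) := fun j =>
    harmonicSum_pos hΛ (by have := hk j; omega)
  refine Summable.of_nonneg_of_le
    (fun j => mul_nonneg (Real.rpow_nonneg (spikeHeight_nonneg hΛ hk j) p) (hL2 j).le)
    (fun j => ?_)
    ((summable_geometric_of_lt_one (by norm_num) (by norm_num : (2:ℝ)⁻¹ < 1)).mul_left 2)
  have hL := harmonicSum_pos hΛ (hk j)
  rw [spikeHeight, Real.div_rpow (by positivity) (by positivity), one_div,
    Real.rpow_inv_rpow hL.le (by linarith)]
  calc ((2:ℝ)⁻¹ ^ j) ^ p / harmonicSum Λ (k j) * harmonicSum Λ (2 * k j)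
      ≤ (2:ℝ)⁻¹ ^ j / harmonicSum Λ (k j) * (2 * harmonicSum Λ (k j)) :=
        mul_le_mul (div_le_div_of_nonneg_right (Real.rpow_le_self_of_le_one (by positivity)
          (pow_le_one₀ (by norm_num) (by norm_num)) hp) hL.le)
          (harmonicSum_two_mul_le hΛ hmono (k j)) (hL2 j).le (by positivity)
    _ = 2 * (2:ℝ)⁻¹ ^ j := by field_simp

theorem spikeHeight_mul_rpow {q : ℝ} (hΛ : ∀ i, 0 < Λ i) (hk : ∀ j, 1 ≤ k j) (j : ℕ) :
    spikeHeight p Λ k j * (k j * spikeWidth n j) ^ (1 / q) =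
      (2:ℝ)⁻¹ ^ j * ((2:ℝ)⁻¹ ^ (j + 2)) ^ (1 / q) / (n j : ℝ) ^ (1 / q) *
        ((k j : ℝ) ^ (1 / q) / harmonicSum Λ (k j) ^ (1 / p)) := by
  have := harmonicSum_pos hΛ (hk j)
  rw [spikeHeight, spikeWidth, Real.mul_rpow (by positivity) (by positivity),
    Real.div_rpow (by positivity) (by positivity)]
  ring

end Parameters

theorem stmt6_general (p q : ℝ) (hp : 1 ≤ p) (hq : 1 ≤ q)
    (Λ : ℕ → ℝ) (hΛpos : ∀ i, 0 < Λ i) (hΛmono : Monotone Λ)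
    (ω : ℝ → ℝ) (hωmono : MonotoneOn ω (Set.Icc 0 1))
    (hωpos : ∀ t : ℝ, 0 < t → t ≤ 1 → 0 < ω t)
    (hunbdd : ¬ Filter.IsBoundedUnder (· ≤ ·) Filter.atTop (fun n : ℕ =>
      (1 / (ω (1 / n) * (n : ℝ) ^ (1 / q))) *
        sSup {v : ℝ | ∃ k : ℕ, 1 ≤ k ∧ k ≤ n ∧
          v = (k : ℝ) ^ (1 / q) / (∑ i ∈ Finset.range k, 1 / Λ i) ^ (1 / p)})) :
    ∃ g : ℝ → ℝ, MemWS p Λ g ∧ ¬ MemH q ω g := by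
  set A : ℕ → ℝ := fun j => (2:ℝ)⁻¹ ^ j * ((2:ℝ)⁻¹ ^ (j + 2)) ^ (1 / q)
  choose n hn hnA using fun j : ℕ => exists_one_le_lt_of_not_isBoundedUnder hunbdd (j / A j)
  choose k hk hkn hkmax using fun j => exists_eq_sSup_Icc
    (fun k : ℕ => (k : ℝ) ^ (1 / q) / (∑ i ∈ Finset.range k, 1 / Λ i) ^ (1 / p)) (hn j)
  have hfit := spikesFit_spikeWidth hk hkn
  have hn1 : ∀ j, 1 / (n j : ℝ) ∈ Ioc 0 1 := fun j => one_div_natCast_mem_Ioc (hn j)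
  refine ⟨spikeFun (spikeWidth n) (spikeHeight p Λ k) k, memWS_spikeFun (by linarith) hΛpos
    hΛmono hfit (spikeHeight_nonneg hΛpos hk) (summable_spikeHeight_rpow_mul hp hΛpos hΛmono hk),
    not_memH_of_tendsto (tendsto_spikeWidth hn) (Eventually.of_forall fun j =>
      hωpos _ (hfit j).1 ((spikeWidth_le_one_div j).trans (hn1 j).2)) ?_⟩
  filter_upwards [eventually_ge_atTop 1] with j hj
  have hω : 0 < ω (1 / n j) := hωpos _ (hn1 j).1 (hn1 j).2
  have hlt := hnA j
  rw [hkmax j, div_lt_iff₀ (by positivity)] at hlt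
  calc j * ω (spikeWidth n j) ≤ j * ω (1 / n j) := by
        gcongr
        exact hωmono ⟨(hfit j).1.le, (spikeWidth_le_one_div j).trans (hn1 j).2⟩
          (Ioc_subset_Icc_self (hn1 j)) (spikeWidth_le_one_div j)
    _ ≤ spikeHeight p Λ k j * (k j * spikeWidth n j) ^ (1 / q) := by
        have : (0:ℝ) < n j := by exact_mod_cast hn j
        rw [spikeHeight_mul_rpow hΛpos hk]
        refine (mul_lt_mul_of_pos_right hlt hω).le.trans_eq ?_
        simp only [A, harmonicSum]
        field_simp
    _ ≤ omegaq q (spikeFun (spikeWidth n) (spikeHeight p Λ k) k) (spikeWidth n j) :=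
        mul_rpow_le_omegaq_spikeFun (by linarith) hfit (spikeHeight_nonneg hΛpos hk)
          (spikeHeight_le (by linarith) hΛpos hk) hj (hk j)

/-- necessity: if
`limsup_n (1/(ω(1/n) n^{1/q})) · max_{1 ≤ k ≤ n} k^{1/q}/(∑_{i=1}^k 1/λᵢ)^{1/p} = +∞`
(i.e. the sequence is not bounded above), then there is `g ∈ ΛBV^{(p)}` with `g ∉ H_ω^q`. -/
theorem stmt6 (p q : ℝ) (hp : 1 ≤ p) (hq : 1 ≤ q)
    (Λ : ℕ → ℝ) (hΛpos : ∀ i, 0 < Λ i) (hΛmono : Monotone Λ)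
    (hΛdiv : Filter.Tendsto (fun n => ∑ i ∈ Finset.range n, 1 / Λ i) Filter.atTop Filter.atTop)
    (ω : ℝ → ℝ) (hω0 : ω 0 = 0) (hωmono : MonotoneOn ω (Set.Icc 0 1))
    (hωcont : ContinuousOn ω (Set.Icc 0 1)) (hωpos : ∀ t : ℝ, 0 < t → t ≤ 1 → 0 < ω t)
    (hunbdd : ¬ Filter.IsBoundedUnder (· ≤ ·) Filter.atTop (fun n : ℕ =>
      (1 / (ω (1 / n) * (n : ℝ) ^ (1 / q))) *
        sSup {v : ℝ | ∃ k : ℕ, 1 ≤ k ∧ k ≤ n ∧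
          v = (k : ℝ) ^ (1 / q) / (∑ i ∈ Finset.range k, 1 / Λ i) ^ (1 / p)})) :
    ∃ g : ℝ → ℝ, MemWS p Λ g ∧ ¬ MemH q ω g :=
  stmt6_general p q hp hq Λ hΛpos hΛmono ω hωmono hωpos hunbdd
end

section
/- Let (λ_i) be a nondecreasing sequence of positive reals and q/p ≥ 0. For any nonnegative reals x_1 ≥ ... ≥ x_n with (Σ_{k=1}^n x_k/λ_k)^{1/p} ≤ V, one has Σ_{k=1}^n x_k^{q/p} ≤ V^q · max_{1 ≤ k ≤ n} k/(Σ_{i=1}^k 1/λ_i)^{q/p}. -/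
/-!
Put `w i = 1 / Λ i`, `W k = w 0 + ⋯ + w (k - 1)`, `A = ∑ w i x i` and `r = q / p`; since
`A ^ r ≤ V ^ q`, it suffices to show `∑ x k ^ r ≤ max_k (k / W k ^ r) * A ^ r`.
For `r ≤ 1`, Chebyshev's sum inequality (`w` and `x ^ r` are similarly ordered) followed by the
concave weighted power-mean inequality gives this with `k = n`.
For `r ≥ 1`, summation by parts writes `x k = ∑_{j ≥ k} u j / W (j + 1)` with
`u j = W (j + 1) * (x j - x (j + 1)) ≥ 0` and `∑ u j = A`: up to the factor `A`, `x` is a convex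
combination of the extremal step profiles `𝟙_{[0, j]} / W (j + 1)`. Hölder on each tail and
exchanging the order of summation give `∑ x k ^ r ≤ A ^ (r - 1) * ∑ u j * (j + 1) / W (j + 1) ^ r`.
-/

open Finset

theorem rpow_inner_le_weight_mul_Lp_of_nonneg {ι : Type*} (s : Finset ι) {p : ℝ} (hp : 1 ≤ p)
    (w f : ι → ℝ) (hw : ∀ i, 0 ≤ w i) (hf : ∀ i, 0 ≤ f i) :
    (∑ i ∈ s, w i * f i) ^ p ≤ (∑ i ∈ s, w i) ^ (p - 1) * ∑ i ∈ s, w i * f i ^ p := by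
  have hW : 0 ≤ ∑ i ∈ s, w i := sum_nonneg fun i _ => hw i
  have hWf : 0 ≤ ∑ i ∈ s, w i * f i ^ p :=
    sum_nonneg fun i _ => mul_nonneg (hw i) (Real.rpow_nonneg (hf i) p)
  have hp0 : p ≠ 0 := by positivity
  calc (∑ i ∈ s, w i * f i) ^ p
      ≤ ((∑ i ∈ s, w i) ^ (1 - p⁻¹) * (∑ i ∈ s, w i * f i ^ p) ^ p⁻¹) ^ p :=
        Real.rpow_le_rpow (sum_nonneg fun i _ => mul_nonneg (hw i) (hf i))
          (Real.inner_le_weight_mul_Lp_of_nonneg s hp w f hw hf) (by linarith)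
    _ = (∑ i ∈ s, w i) ^ (p - 1) * ∑ i ∈ s, w i * f i ^ p := by
        rw [Real.mul_rpow (by positivity) (by positivity), ← Real.rpow_mul hW,
          ← Real.rpow_mul hWf, inv_mul_cancel₀ hp0, Real.rpow_one, sub_mul, one_mul,
          inv_mul_cancel₀ hp0]

theorem sum_range_sum_Ico_comm {M : Type*} [AddCommMonoid M] (n : ℕ) (f : ℕ → ℕ → M) :
    ∑ k ∈ range n, ∑ j ∈ Ico k n, f k j = ∑ j ∈ range n, ∑ k ∈ range (j + 1), f k j := by
  simpa only [range_eq_Ico] using sum_Ico_Ico_comm 0 n f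

theorem sum_Ico_sub_succ_of_eq_zero {G : Type*} [AddCommGroup G] {X : ℕ → G} {k n : ℕ}
    (hXn : X n = 0) (hk : k ≤ n) : ∑ j ∈ Ico k n, (X j - X (j + 1)) = X k := by
  simpa [hXn] using congrArg Neg.neg (sum_Ico_sub X hk)

theorem sum_mul_eq_sum_partialSum_mul_sub {R : Type*} [CommRing R] {w X : ℕ → R} {n : ℕ}
    (hXn : X n = 0) :
    ∑ i ∈ range n, w i * X i = ∑ j ∈ range n, (∑ i ∈ range (j + 1), w i) * (X j - X (j + 1)) := by
  calc ∑ i ∈ range n, w i * X i = ∑ i ∈ range n, ∑ j ∈ Ico i n, w i * (X j - X (j + 1)) :=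
        sum_congr rfl fun i hi => by
          rw [← mul_sum, sum_Ico_sub_succ_of_eq_zero hXn (mem_range.1 hi).le]
    _ = _ := by simp only [sum_range_sum_Ico_comm, sum_mul]

section

variable {n : ℕ} {r M : ℝ} {w X : ℕ → ℝ}

theorem sum_rpow_le_of_le_one_s16 (hr₀ : 0 < r) (hr₁ : r ≤ 1) (hn : 0 < n) (hw : ∀ i, 0 < w i)
    (hw' : Antitone w) (hX₀ : ∀ i, 0 ≤ X i) (hX : Antitone X) :
    ∑ i ∈ range n, X i ^ r ≤
      n / (∑ i ∈ range n, w i) ^ r * (∑ i ∈ range n, w i * X i) ^ r := by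
  set W := ∑ i ∈ range n, w i
  set A := ∑ i ∈ range n, w i * X i
  have hW : 0 < W := sum_pos (fun i _ => hw i) (nonempty_range_iff.2 hn.ne')
  have chebyshev : W * ∑ i ∈ range n, X i ^ r ≤ n * ∑ i ∈ range n, w i * X i ^ r := by
    have hXr : Antitone fun i => X i ^ r := fun i j h => Real.rpow_le_rpow (hX₀ j) (hX h) hr₀.le
    simpa only [card_range] using
      ((hw'.monovary hXr).monovaryOn (range n)).sum_mul_sum_le_card_mul_sum
  have holder : ∑ i ∈ range n, w i * X i ^ r ≤ W ^ (1 - r) * A ^ r := by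
    have hpow : ∀ i, (X i ^ r) ^ r⁻¹ = X i := fun i => Real.rpow_rpow_inv (hX₀ i) hr₀.ne'
    simpa only [inv_inv, hpow] using Real.inner_le_weight_mul_Lp_of_nonneg (range n)
      (one_le_inv₀ hr₀ |>.2 hr₁) w (fun i => X i ^ r) (fun i => (hw i).le)
      (fun i => Real.rpow_nonneg (hX₀ i) r)
  refine le_of_mul_le_mul_left ?_ hW
  calc W * ∑ i ∈ range n, X i ^ r ≤ n * (W ^ (1 - r) * A ^ r) :=
        chebyshev.trans (mul_le_mul_of_nonneg_left holder n.cast_nonneg)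
    _ = W * (n / W ^ r * A ^ r) := by
        rw [Real.rpow_sub hW, Real.rpow_one]; field_simp

theorem sum_rpow_le_of_one_le_s16 (hr : 1 ≤ r) (hw : ∀ i, 0 < w i) (hX : Antitone X) (hXn : X n = 0)
    (hM : ∀ k ∈ Icc 1 n, (k : ℝ) / (∑ i ∈ range k, w i) ^ r ≤ M) :
    ∑ k ∈ range n, X k ^ r ≤ M * (∑ i ∈ range n, w i * X i) ^ r := by
  set W : ℕ → ℝ := fun k => ∑ i ∈ range k, w i
  have hW : ∀ j, 0 < W (j + 1) := fun j => sum_pos (fun i _ => hw i) nonempty_range_add_one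
  set u : ℕ → ℝ := fun j => W (j + 1) * (X j - X (j + 1))
  set z : ℕ → ℝ := fun j => (W (j + 1))⁻¹
  have hu : ∀ j, 0 ≤ u j := fun j => mul_nonneg (hW j).le (sub_nonneg.2 (hX j.le_succ))
  have hz : ∀ j, 0 ≤ z j := fun j => (inv_pos.2 (hW j)).le
  have hX_eq : ∀ k ≤ n, X k = ∑ j ∈ Ico k n, u j * z j := fun k hk => by
    rw [← sum_Ico_sub_succ_of_eq_zero hXn hk]
    exact sum_congr rfl fun j _ => by simp only [u, z]; field_simp [(hW j).ne']
  set A := ∑ i ∈ range n, w i * X i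
  have hA : A = ∑ j ∈ range n, u j := sum_mul_eq_sum_partialSum_mul_sub hXn
  have hA₀ : 0 ≤ A := hA ▸ sum_nonneg fun j _ => hu j
  have htail : ∀ k ∈ range n, X k ^ r ≤ A ^ (r - 1) * ∑ j ∈ Ico k n, u j * z j ^ r := by
    intro k hk
    rw [hX_eq k (mem_range.1 hk).le]
    have hsub : ∑ j ∈ Ico k n, u j ≤ A := hA ▸ sum_le_sum_of_subset_of_nonneg
      (fun j hj => mem_range.2 (mem_Ico.1 hj).2) fun j _ _ => hu j
    refine (rpow_inner_le_weight_mul_Lp_of_nonneg _ hr u z hu hz).trans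
      (mul_le_mul_of_nonneg_right ?_ ?_)
    · exact Real.rpow_le_rpow (sum_nonneg fun j _ => hu j) hsub (by linarith)
    · exact sum_nonneg fun j _ => mul_nonneg (hu j) (Real.rpow_nonneg (hz j) r)
  have hcount : ∀ j ∈ range n, ((j + 1 : ℕ) : ℝ) * z j ^ r ≤ M := by
    intro j hj
    rw [Real.inv_rpow (hW j).le, ← div_eq_mul_inv]
    exact hM (j + 1) (mem_Icc.2 ⟨Nat.le_add_left 1 j, mem_range.1 hj⟩)
  calc ∑ k ∈ range n, X k ^ r
      ≤ ∑ k ∈ range n, A ^ (r - 1) * ∑ j ∈ Ico k n, u j * z j ^ r := sum_le_sum htail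
    _ = A ^ (r - 1) * ∑ j ∈ range n, u j * (((j + 1 : ℕ) : ℝ) * z j ^ r) := by
        rw [← mul_sum, sum_range_sum_Ico_comm]
        congr 1
        refine sum_congr rfl fun j _ => ?_
        rw [sum_const, card_range, nsmul_eq_mul]; ring
    _ ≤ A ^ (r - 1) * ∑ j ∈ range n, u j * M := by
        gcongr with j hj
        · exact hu j
        · exact hcount j hj
    _ = M * A ^ r := by
        rw [← sum_mul, ← hA, ← mul_assoc, ← Real.rpow_add_one' hA₀ (by linarith),
          sub_add_cancel, mul_comm]

theorem sum_rpow_le_mul_rpow_sum_mul (hr : 0 < r) (hw : ∀ i, 0 < w i) (hw' : Antitone w)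
    (hX₀ : ∀ i, 0 ≤ X i) (hX : Antitone X) (hXn : X n = 0)
    (hM : ∀ k ∈ Icc 1 n, (k : ℝ) / (∑ i ∈ range k, w i) ^ r ≤ M) :
    ∑ k ∈ range n, X k ^ r ≤ M * (∑ i ∈ range n, w i * X i) ^ r := by
  rcases le_total r 1 with hr₁ | hr₁
  · rcases n.eq_zero_or_pos with rfl | hn
    · simp [Real.zero_rpow hr.ne']
    · have hA₀ : 0 ≤ ∑ i ∈ range n, w i * X i :=
        sum_nonneg fun i _ => mul_nonneg (hw i).le (hX₀ i)
      exact (sum_rpow_le_of_le_one_s16 hr hr₁ hn hw hw' hX₀ hX).trans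
        (mul_le_mul_of_nonneg_right (hM n (mem_Icc.2 ⟨hn, le_rfl⟩)) (Real.rpow_nonneg hA₀ r))
  · exact sum_rpow_le_of_one_le_s16 hr₁ hw hX hXn hM

end

def extendByZero {α : Type*} [Zero α] {n : ℕ} (x : Fin n → α) (i : ℕ) : α :=
  if h : i < n then x ⟨i, h⟩ else 0

section

variable {α : Type*} [Zero α] {n : ℕ} {x : Fin n → α}

@[simp]
theorem extendByZero_val (i : Fin n) : extendByZero x i = x i := dif_pos i.isLt

theorem extendByZero_of_le {i : ℕ} (hi : n ≤ i) : extendByZero x i = 0 := dif_neg hi.not_gt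

variable [Preorder α]

theorem extendByZero_nonneg (hx : ∀ i, 0 ≤ x i) (i : ℕ) : 0 ≤ extendByZero x i := by
  unfold extendByZero; split_ifs
  exacts [hx _, le_rfl]

theorem antitone_extendByZero (hx₀ : ∀ i, 0 ≤ x i) (hx : Antitone x) :
    Antitone (extendByZero x) := by
  intro i j hij
  by_cases hj : j < n
  · simp only [extendByZero, dif_pos hj, dif_pos (hij.trans_lt hj)]
    exact hx (Fin.mk_le_mk.2 hij)
  · rw [extendByZero_of_le (not_lt.1 hj)]
    exact extendByZero_nonneg hx₀ i

end

theorem le_sSup_of_mem_Icc (f : ℕ → ℝ) {n k : ℕ} (hk : k ∈ Icc 1 n) :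
    f k ≤ sSup {v : ℝ | ∃ k : ℕ, 1 ≤ k ∧ k ≤ n ∧ v = f k} := by
  refine le_csSup (((Set.finite_Icc 1 n).image f).subset ?_).bddAbove
    ⟨k, (mem_Icc.1 hk).1, (mem_Icc.1 hk).2, rfl⟩
  rintro _ ⟨k, hk₁, hkn, rfl⟩
  exact ⟨k, ⟨hk₁, hkn⟩, rfl⟩

theorem stmt16_general (p q V : ℝ) (hp : 1 ≤ p) (hq : 1 ≤ q)
    (Λ : ℕ → ℝ) (hΛpos : ∀ i, 0 < Λ i) (hΛmono : Monotone Λ)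
    (n : ℕ) (x : Fin n → ℝ) (hx0 : ∀ i, 0 ≤ x i)
    (hxmono : ∀ i j : Fin n, i ≤ j → x j ≤ x i)
    (hcon : (∑ i, x i / Λ (i : ℕ)) ^ (1 / p) ≤ V) :
    (∑ i, (x i) ^ (q / p)) ≤
      V ^ q * sSup {v : ℝ | ∃ k : ℕ, 1 ≤ k ∧ k ≤ n ∧
        v = (k : ℝ) / (∑ i ∈ Finset.range k, 1 / Λ i) ^ (q / p)} := by
  set S := {v : ℝ | ∃ k : ℕ, 1 ≤ k ∧ k ≤ n ∧
    v = (k : ℝ) / (∑ i ∈ Finset.range k, 1 / Λ i) ^ (q / p)}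
  have hr : 0 < q / p := by positivity
  have hS_le : ∀ k ∈ Icc 1 n, (k : ℝ) / (∑ i ∈ range k, 1 / Λ i) ^ (q / p) ≤ sSup S :=
    fun k => le_sSup_of_mem_Icc (fun k : ℕ => (k : ℝ) / (∑ i ∈ range k, 1 / Λ i) ^ (q / p))
  have hS₀ : 0 ≤ sSup S := Real.sSup_nonneg <| by
    rintro _ ⟨k, -, -, rfl⟩
    exact div_nonneg k.cast_nonneg
      (Real.rpow_nonneg (sum_nonneg fun i _ => (one_div_pos.2 (hΛpos i)).le) _)
  set A := ∑ i, x i / Λ i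
  have hA : A ^ (q / p) ≤ V ^ q := by
    have hA₀ : 0 ≤ A := sum_nonneg fun i _ => div_nonneg (hx0 i) (hΛpos i).le
    rw [← one_div_mul_eq_div, Real.rpow_mul hA₀]
    exact Real.rpow_le_rpow (by positivity) hcon (by linarith)
  have key := sum_rpow_le_mul_rpow_sum_mul (w := fun i => 1 / Λ i) hr
    (fun i => one_div_pos.2 (hΛpos i)) (fun i j h => one_div_le_one_div_of_le (hΛpos i) (hΛmono h))
    (extendByZero_nonneg hx0) (antitone_extendByZero hx0 hxmono) (extendByZero_of_le le_rfl) hS_le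
  rw [← Fin.sum_univ_eq_sum_range, ← Fin.sum_univ_eq_sum_range] at key
  simp only [extendByZero_val, one_div_mul_eq_div] at key
  calc ∑ i, x i ^ (q / p) ≤ sSup S * A ^ (q / p) := key
    _ ≤ sSup S * V ^ q := mul_le_mul_of_nonneg_left hA hS₀
    _ = V ^ q * sSup S := mul_comm _ _

/-- for `(λᵢ)` nondecreasing positive, `p, q ∈ [1, ∞)`, `V > 0`, and
nonincreasing nonnegative reals `x₁ ≥ ⋯ ≥ xₙ` with `(∑ x_k/λ_k)^{1/p} ≤ V`, one has
`∑ x_k^{q/p} ≤ V^q · max_{1 ≤ k ≤ n} k/(∑_{i=1}^k 1/λᵢ)^{q/p}`. -/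
theorem stmt16 (p q V : ℝ) (hp : 1 ≤ p) (hq : 1 ≤ q) (hV : 0 < V)
    (Λ : ℕ → ℝ) (hΛpos : ∀ i, 0 < Λ i) (hΛmono : Monotone Λ)
    (n : ℕ) (hn : 1 ≤ n) (x : Fin n → ℝ) (hx0 : ∀ i, 0 ≤ x i)
    (hxmono : ∀ i j : Fin n, i ≤ j → x j ≤ x i)
    (hcon : (∑ i, x i / Λ (i : ℕ)) ^ (1 / p) ≤ V) :
    (∑ i, (x i) ^ (q / p)) ≤
      V ^ q * sSup {v : ℝ | ∃ k : ℕ, 1 ≤ k ∧ k ≤ n ∧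
        v = (k : ℝ) / (∑ i ∈ Finset.range k, 1 / Λ i) ^ (q / p)} :=
  stmt16_general p q V hp hq Λ hΛpos hΛmono n x hx0 hxmono hcon
end
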